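/- arXiv:2509.17579 — 9 statements merged into one kernel-verified Lean document; each statement's English description precedes it below -/
import Mathlib

section
/- Let H be an n×n complex Hermitian matrix, let p ≥ 1 be an integer, and let S : ℝ → M_n(ℂ) be p-times continuously differentiable such that S(t) is unitary for every t and the k-th derivative S⁽ᵏ⁾(0) = (−iH)ᵏ for all 0 ≤ k ≤ p. Then the map J(t) := S′(t)·S(t)* + iH satisfies J⁽ᵏ⁾(0) = 0 for all 0 ≤ k ≤ p − 1. -/
open Matrix

attribute [local instance] Matrix.linftyOpNormedAddCommGroup Matrix.linftyOpNormedRing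
  Matrix.linftyOpNormedAlgebra

/-!
Write `X = -iH`. The hypotheses say that `S` agrees with `exp(tX)` to order `p` at `0`, and since
`H` is Hermitian, `S*` agrees with `exp(-tX)` to the same order. By the Leibniz rule the `k`-th
derivative of `S′·S*` at `0` is the binomial expansion of `X·(X + (-X))ᵏ`, which vanishes for
`k ≥ 1` and equals `X = -iH` for `k = 0`.
-/

theorem continuousStar_of_finiteDimensional (𝕜 : Type*) [NontriviallyNormedField 𝕜]
    [CompleteSpace 𝕜] [StarRing 𝕜] [TrivialStar 𝕜] (F : Type*) [NormedAddCommGroup F]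
    [NormedSpace 𝕜 F] [FiniteDimensional 𝕜 F] [StarAddMonoid F] [StarModule 𝕜 F] :
    ContinuousStar F :=
  ⟨LinearMap.continuous_of_finiteDimensional
    ({ toFun := star, map_add' := star_add, map_smul' := fun r x => by simp [star_smul] } :
      F →ₗ[𝕜] F)⟩

section

variable {𝕜 : Type*} [NontriviallyNormedField 𝕜] [StarRing 𝕜] [TrivialStar 𝕜]
  {F : Type*} [NormedAddCommGroup F] [NormedSpace 𝕜 F] [StarAddMonoid F] [StarModule 𝕜 F]
  [ContinuousStar F]

theorem ContDiff.star {E : Type*} [NormedAddCommGroup E] [NormedSpace 𝕜 E] {f : E → F}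
    {n : WithTop ℕ∞} (hf : ContDiff 𝕜 n f) : ContDiff 𝕜 n fun t => star (f t) :=
  (starL' 𝕜).contDiff.comp hf

theorem iteratedDeriv_star (k : ℕ) (f : 𝕜 → F) (x : 𝕜) :
    iteratedDeriv k (fun t => star (f t)) x = star (iteratedDeriv k f x) := by
  have h := (starL' 𝕜 : F ≃L[𝕜] F).iteratedFDeriv_comp_left (f := f) (x := x) (i := k)
  simp only [iteratedDeriv_eq_iteratedFDeriv]
  exact congrArg (· fun _ => 1) h

end

theorem iteratedDeriv_mul_eq_mul_add_pow {𝕜 𝔸 : Type*} [NontriviallyNormedField 𝕜]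
    [NormedRing 𝔸] [NormedAlgebra 𝕜 𝔸] {f g : 𝕜 → 𝔸} {x : 𝕜} {k : ℕ}
    (hf : ContDiffAt 𝕜 k f x) (hg : ContDiffAt 𝕜 k g x)
    {A X Y : 𝔸} (hXY : Commute X Y) (hfX : ∀ j ≤ k, iteratedDeriv j f x = A * X ^ j)
    (hgY : ∀ j ≤ k, iteratedDeriv j g x = Y ^ j) :
    iteratedDeriv k (fun t => f t * g t) x = A * (X + Y) ^ k := by
  rw [iteratedDeriv_fun_mul hf hg, hXY.add_pow, Finset.mul_sum]
  refine Finset.sum_congr rfl fun j hj => ?_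
  have hjk : j ≤ k := Nat.lt_succ_iff.mp (Finset.mem_range.mp hj)
  rw [hfX j hjk, hgY (k - j) (Nat.sub_le k j), mul_assoc, mul_assoc,
    (Nat.cast_commute _ _).left_comm, ← (Nat.cast_commute _ _).eq]

theorem trotter_generator_vanishing_derivs_general
    (n : ℕ) (H : Matrix (Fin n) (Fin n) ℂ) (hH : H.IsHermitian)
    (p : ℕ) (hp : 1 ≤ p)
    (S : ℝ → Matrix (Fin n) (Fin n) ℂ) (hS : ContDiff ℝ p S)
    (hderivs : ∀ k ≤ p, iteratedDeriv k S 0 = ((-Complex.I) • H) ^ k) :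
    ∀ k ≤ p - 1, iteratedDeriv k (fun t => deriv S t * (S t)ᴴ + Complex.I • H) 0 = 0 := by
  obtain ⟨q, rfl⟩ : ∃ q, p = q + 1 := ⟨p - 1, by omega⟩
  intro k hk
  have hkq : (k : WithTop ℕ∞) ≤ q := by exact_mod_cast (by omega : k ≤ q)
  -- Mathlib's `ContinuousStar` instance for matrices is stated for the entrywise topology, not for
  -- the (equal, but not syntactically) topology of the `linftyOp` norm.
  have := continuousStar_of_finiteDimensional ℝ (Matrix (Fin n) (Fin n) ℂ)
  set X := (-Complex.I) • H
  have hX : star X = -X := by rw [star_smul, hH.star_eq]; simp [X]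
  have hS' : ContDiff ℝ k (deriv S) := (ContDiff.deriv' (by exact_mod_cast hS)).of_le hkq
  have hSstar : ContDiff ℝ k fun t => (S t)ᴴ :=
    hS.star.of_le (hkq.trans (by exact_mod_cast q.le_succ))
  have hprod : iteratedDeriv k (fun t => deriv S t * (S t)ᴴ) 0 = X * (X + -X) ^ k :=
    -- the closing `rfl` reconciles the two `ℝ`-module structures on matrices (restricted from `ℂ`,
    -- and from the `ℝ`-algebra structure), which agree only after unfolding
    iteratedDeriv_mul_eq_mul_add_pow hS'.contDiffAt hSstar.contDiffAt (Commute.refl X).neg_right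
      (fun j hj => by rw [← pow_succ', ← hderivs (j + 1) (by omega), iteratedDeriv_succ']; rfl)
      (fun j hj => (iteratedDeriv_star j S 0).trans (by rw [hderivs j (by omega), star_pow, hX]))
  rw [iteratedDeriv_fun_add (hS'.mul hSstar).contDiffAt contDiffAt_const, hprod,
    iteratedDeriv_const, add_neg_cancel]
  rcases k with _ | k <;> simp [X]

/-- If `S : ℝ → Mₙ(ℂ)` is a `p`-times continuously differentiable family of unitary matrices
whose derivatives at `0` satisfy `S⁽ᵏ⁾(0) = (−iH)ᵏ` for `0 ≤ k ≤ p` (a `p`-th order product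
formula for `exp(−iHt)`), then `J(t) = S′(t)·S(t)* + iH` satisfies `J⁽ᵏ⁾(0) = 0` for
`0 ≤ k ≤ p − 1`. -/
theorem trotter_generator_vanishing_derivs
    (n : ℕ) (H : Matrix (Fin n) (Fin n) ℂ) (hH : H.IsHermitian)
    (p : ℕ) (hp : 1 ≤ p)
    (S : ℝ → Matrix (Fin n) (Fin n) ℂ) (hS : ContDiff ℝ p S)
    (hunit : ∀ t, S t ∈ Matrix.unitaryGroup (Fin n) ℂ)
    (hderivs : ∀ k ≤ p, iteratedDeriv k S 0 = ((-Complex.I) • H) ^ k) :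
    ∀ k ≤ p - 1, iteratedDeriv k (fun t => deriv S t * (S t)ᴴ + Complex.I • H) 0 = 0 :=
  trotter_generator_vanishing_derivs_general n H hH p hp S hS hderivs
end

section
/- Let H be an n×n complex Hermitian matrix, let p ≥ 1 be an integer, and let S : ℝ → M_n(ℂ) be (p+1)-times continuously differentiable such that S(t) is unitary for every t, S(0) = I, and S⁽ᵏ⁾(0) = (−iH)ᵏ for all 0 ≤ k ≤ p. Set J(t) := S′(t)·S(t)* + iH. Then for every τ ≥ 0, S(τ) − exp(−iHτ) = (1/(p−1)!) · ∫₀^τ ∫₀^{τ₁} exp(−iH(τ−τ₁)) · J⁽ᵖ⁾(τ₂) · S(τ₁) · (τ₁−τ₂)^{p−1} dτ₂ dτ₁. -/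
/-!
Unitarity gives `S' = -iH·S + J·S`, so Duhamel's formula yields
`S τ - exp(-iHτ) = ∫₀^τ exp(-iH(τ-τ₁)) J(τ₁) S(τ₁) dτ₁`. The order conditions say that
`J·S = S' + iH·S` vanishes to order `p` at `0`; as `S 0 = 1`, Leibniz' rule transfers this to `J`,
and Taylor's formula with integral remainder then writes
`J(τ₁) = (1/(p-1)!) ∫₀^{τ₁} (τ₁-τ₂)^{p-1} J⁽ᵖ⁾(τ₂) dτ₂`.
-/

open Matrix MeasureTheory intervalIntegral

attribute [local instance] Matrix.linftyOpNormedAddCommGroup Matrix.linftyOpNormedRing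
  Matrix.linftyOpNormedAlgebra

section IteratedDeriv

variable {𝕜 A : Type*} [NontriviallyNormedField 𝕜] [NormedRing A] [NormedAlgebra 𝕜 A]

theorem iteratedDeriv_eq_zero_of_iteratedDeriv_mul_eq_zero {f g : 𝕜 → A} {N : ℕ} {x : 𝕜}
    (hf : ContDiffAt 𝕜 N f x) (hg : ContDiffAt 𝕜 N g x) (hgx : g x = 1)
    (hfg : ∀ k ≤ N, iteratedDeriv k (f * g) x = 0) :
    ∀ k ≤ N, iteratedDeriv k f x = 0 := by
  intro k
  induction k using Nat.strong_induction_on with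
  | _ k ih =>
    intro hk
    have hk' : (k : WithTop ℕ∞) ≤ N := by exact_mod_cast hk
    have h := hfg k hk
    rw [iteratedDeriv_mul (hf.of_le hk') (hg.of_le hk'), Finset.sum_range_succ,
      Finset.sum_eq_zero fun i hi ↦ by
        rw [ih i (Finset.mem_range.1 hi) (by grind), mul_zero, zero_mul]] at h
    simpa [hgx] using h

theorem iteratedDeriv_deriv_sub_mul_eq_zero (C : A) {S : 𝕜 → A} {N : ℕ} {x : 𝕜}
    (hS : ContDiff 𝕜 (N + 1) S) (h : ∀ k ≤ N + 1, iteratedDeriv k S x = C ^ k) :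
    ∀ k ≤ N, iteratedDeriv k (fun t ↦ deriv S t - C * S t) x = 0 := by
  intro k hk
  have hk' : (k : WithTop ℕ∞) ≤ N := by exact_mod_cast hk
  have hS' : ContDiff 𝕜 N (deriv S) := (contDiff_succ_iff_deriv.1 hS).2.2
  have hSk : ContDiffAt 𝕜 k S x := hS.contDiffAt.of_le (hk'.trans le_self_add)
  rw [iteratedDeriv_fun_sub (hS'.contDiffAt.of_le hk') (contDiffAt_const.mul hSk),
    iteratedDeriv_const_mul C hSk, ← iteratedDeriv_succ', h k (by omega), h (k + 1) (by omega),
    pow_succ', sub_self]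

end IteratedDeriv

theorem taylor_integral_remainder_of_iteratedDeriv_eq_zero {E : Type*} [NormedAddCommGroup E]
    [NormedSpace ℝ E] [CompleteSpace E] {f : ℝ → E} {n : ℕ} {x₀ : ℝ}
    (hf : ContDiff ℝ (n + 1) f) (h : ∀ k ≤ n, iteratedDeriv k f x₀ = 0) (x : ℝ) :
    f x = (n.factorial : ℝ)⁻¹ • ∫ t in x₀..x, (x - t) ^ n • iteratedDeriv (n + 1) f t := by
  rcases eq_or_ne x₀ x with rfl | hx
  · simpa using h 0 (Nat.zero_le n)
  have hderiv : ∀ k ≤ n + 1, ∀ t ∈ Set.uIcc x₀ x,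
      iteratedDerivWithin k f (Set.uIcc x₀ x) t = iteratedDeriv k f t := fun k hk t ht ↦
    iteratedDerivWithin_eq_iteratedDeriv (uniqueDiffOn_uIcc hx)
      (hf.contDiffAt.of_le (by exact_mod_cast hk)) ht
  have htaylor := taylor_integral_remainder (x₀ := x₀) (x := x) hf.contDiffOn
  rw [taylor_within_apply, Finset.sum_eq_zero fun k hk ↦ by
    rw [hderiv k (by grind) x₀ Set.left_mem_uIcc, h k (by grind), smul_zero], sub_zero,
    integral_congr fun t ht ↦ by rw [hderiv (n + 1) le_rfl t ht]] at htaylor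
  rw [htaylor, ← intervalIntegral.integral_smul]
  refine integral_congr fun t _ ↦ ?_
  simp only [smul_smul, div_eq_inv_mul]

section BanachAlgebra

variable {A : Type*} [NormedRing A] [NormedAlgebra ℝ A] [CompleteSpace A]

theorem eq_exp_smul_mul_add_integral_of_hasDerivAt (C : A) {S F : ℝ → A}
    (hS : ∀ t, HasDerivAt S (C * S t + F t) t) (hF : Continuous F) (a b : ℝ) :
    S b = NormedSpace.exp ((b - a) • C) * S a +
      ∫ t in a..b, NormedSpace.exp ((b - t) • C) * F t := by
  have hE : ∀ t : ℝ, HasDerivAt (fun u : ℝ ↦ NormedSpace.exp ((b - u) • C))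
      ((-1 : ℝ) • (NormedSpace.exp ((b - t) • C) * C)) t := fun t ↦
    (hasDerivAt_exp_smul_const C (b - t)).scomp t ((hasDerivAt_id t).const_sub b)
  have hG : ∀ t, HasDerivAt (fun u ↦ NormedSpace.exp ((b - u) • C) * S u)
      (NormedSpace.exp ((b - t) • C) * F t) t := by
    intro t
    convert (hE t).fun_mul (hS t) using 1
    simp only [neg_one_smul, neg_mul, mul_add, mul_assoc]
    abel
  have hcont : Continuous fun t ↦ NormedSpace.exp ((b - t) • C) * F t :=
    (continuous_iff_continuousAt.2 fun t ↦ (hE t).continuousAt).mul hF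
  rw [integral_eq_sub_of_hasDerivAt (fun t _ ↦ hG t) (hcont.intervalIntegrable a b)]
  simp

theorem mul_intervalIntegral_mul {f : ℝ → A} {a b : ℝ} (hf : IntervalIntegrable f volume a b)
    (c d : A) : c * (∫ t in a..b, f t) * d = ∫ t in a..b, c * f t * d :=
  ((ContinuousLinearMap.mul ℝ A).flip d ∘L ContinuousLinearMap.mul ℝ A c
    |>.intervalIntegral_comp_comm hf).symm

theorem mul_mul_eq_smul_integral_of_iteratedDeriv_eq_zero {f : ℝ → A} {n : ℕ} {x₀ : ℝ}
    (hf : ContDiff ℝ (n + 1) f) (h : ∀ k ≤ n, iteratedDeriv k f x₀ = 0) (c d : A) (x : ℝ) :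
    c * f x * d = (n.factorial : ℝ)⁻¹ •
      ∫ t in x₀..x, (x - t) ^ n • (c * iteratedDeriv (n + 1) f t * d) := by
  have hcont : Continuous fun t ↦ (x - t) ^ n • iteratedDeriv (n + 1) f t :=
    ((continuous_const.sub continuous_id).pow n).smul
      (hf.continuous_iteratedDeriv (n + 1) le_rfl)
  rw [taylor_integral_remainder_of_iteratedDeriv_eq_zero hf h x, mul_smul_comm, smul_mul_assoc,
    mul_intervalIntegral_mul (hcont.intervalIntegrable x₀ x)]
  simp only [mul_smul_comm, smul_mul_assoc]

end BanachAlgebra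

theorem trotter_local_error_sum_representation_general
    (n : ℕ) (H : Matrix (Fin n) (Fin n) ℂ)
    (p : ℕ) (hp : 1 ≤ p)
    (S : ℝ → Matrix (Fin n) (Fin n) ℂ) (hS : ContDiff ℝ (p + 1) S)
    (hunit : ∀ t, S t ∈ Matrix.unitaryGroup (Fin n) ℂ) (hS0 : S 0 = 1)
    (hderivs : ∀ k ≤ p, iteratedDeriv k S 0 = ((-Complex.I) • H) ^ k)
    (J : ℝ → Matrix (Fin n) (Fin n) ℂ)
    (hJ : ∀ t, J t = deriv S t * (S t)ᴴ + Complex.I • H)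
    (τ : ℝ) :
    S τ - NormedSpace.exp ((-Complex.I * (τ : ℂ)) • H) =
      (((p - 1).factorial : ℝ))⁻¹ •
        ∫ τ₁ in (0:ℝ)..τ, ∫ τ₂ in (0:ℝ)..τ₁,
          ((τ₁ - τ₂) ^ (p - 1)) •
            (NormedSpace.exp ((-Complex.I * ((τ - τ₁ : ℝ) : ℂ)) • H) *
              iteratedDeriv p J τ₂ * S τ₁) := by
  obtain ⟨m, rfl⟩ : ∃ m, p = m + 1 := ⟨p - 1, by omega⟩
  simp only [Nat.add_sub_cancel]
  set C : Matrix (Fin n) (Fin n) ℂ := (-Complex.I) • H with hC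
  have hexp (r : ℝ) : NormedSpace.exp ((-Complex.I * (r : ℂ)) • H) = NormedSpace.exp (r • C) := by
    rw [mul_comm, mul_smul, Complex.coe_smul]
  have hJS (t : ℝ) : J t * S t = deriv S t - C * S t := by
    rw [hJ, add_mul, mul_assoc, ← Matrix.star_eq_conjTranspose,
      Unitary.star_mul_self_of_mem (hunit t), mul_one, hC, neg_smul, neg_mul, sub_neg_eq_add]
  have hS' : ContDiff ℝ (m + 1) S := hS.of_le (by norm_cast; omega)
  have hJ_contDiff : ContDiff ℝ (m + 1) J := by
    rw [funext hJ]
    exact ((contDiff_succ_iff_deriv.1 hS).2.2.mul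
      ((starL' ℝ (A := Matrix (Fin n) (Fin n) ℂ)).contDiff.comp hS')).add contDiff_const
  have hJ_jet : ∀ k ≤ m, iteratedDeriv k J 0 = 0 :=
    iteratedDeriv_eq_zero_of_iteratedDeriv_mul_eq_zero (hJ_contDiff.of_le le_self_add).contDiffAt
      (hS'.of_le le_self_add).contDiffAt hS0
      (by rw [show J * S = fun t ↦ deriv S t - C * S t from funext hJS]
          exact iteratedDeriv_deriv_sub_mul_eq_zero C hS' hderivs)
  have hduhamel := eq_exp_smul_mul_add_integral_of_hasDerivAt C (F := fun t ↦ J t * S t)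
    (fun t ↦ by rw [hJS, add_sub_cancel]; exact (hS.differentiable (by simp) t).hasDerivAt)
    (hJ_contDiff.continuous.mul hS.continuous) 0 τ
  rw [sub_zero, hS0, mul_one] at hduhamel
  simp only [hexp]
  -- The operations of the local normed-algebra structure agree with the goal's `Matrix` operations
  -- only after unfolding its `def`s, hence `trans` and `exact` instead of `rw`.
  refine (sub_eq_of_eq_add' hduhamel).trans ?_
  rw [← intervalIntegral.integral_smul]
  refine integral_congr fun t _ ↦ ?_
  rw [← mul_assoc]
  exact mul_mul_eq_smul_integral_of_iteratedDeriv_eq_zero hJ_contDiff hJ_jet _ _ t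

/-- **Local-error-sum representation of Trotter error.** If `S : ℝ → Mₙ(ℂ)` is a
`(p+1)`-times continuously differentiable family of unitary matrices with `S 0 = I` and
`S⁽ᵏ⁾(0) = (−iH)ᵏ` for `0 ≤ k ≤ p`, then with `J(t) = S′(t)·S(t)* + iH`, for every `τ ≥ 0`:
`S τ − exp(−iHτ) = (1/(p−1)!)·∫₀^τ ∫₀^{τ₁} exp(−iH(τ−τ₁))·J⁽ᵖ⁾(τ₂)·S(τ₁)·(τ₁−τ₂)^{p−1} dτ₂ dτ₁`. -/
theorem trotter_local_error_sum_representation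
    (n : ℕ) (H : Matrix (Fin n) (Fin n) ℂ) (hH : H.IsHermitian)
    (p : ℕ) (hp : 1 ≤ p)
    (S : ℝ → Matrix (Fin n) (Fin n) ℂ) (hS : ContDiff ℝ (p + 1) S)
    (hunit : ∀ t, S t ∈ Matrix.unitaryGroup (Fin n) ℂ) (hS0 : S 0 = 1)
    (hderivs : ∀ k ≤ p, iteratedDeriv k S 0 = ((-Complex.I) • H) ^ k)
    (J : ℝ → Matrix (Fin n) (Fin n) ℂ)
    (hJ : ∀ t, J t = deriv S t * (S t)ᴴ + Complex.I • H)
    (τ : ℝ) (hτ : 0 ≤ τ) :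
    S τ - NormedSpace.exp ((-Complex.I * (τ : ℂ)) • H) =
      (((p - 1).factorial : ℝ))⁻¹ •
        ∫ τ₁ in (0:ℝ)..τ, ∫ τ₂ in (0:ℝ)..τ₁,
          ((τ₁ - τ₂) ^ (p - 1)) •
            (NormedSpace.exp ((-Complex.I * ((τ - τ₁ : ℝ) : ℂ)) • H) *
              iteratedDeriv p J τ₂ * S τ₁) :=
  trotter_local_error_sum_representation_general n H p hp S hS hunit hS0 hderivs J hJ τ
end

section
/- Let H₁, …, H_K be n×n complex Hermitian matrices, let r : {1,…,M} → {1,…,K} and x₁, …, x_M ∈ ℝ satisfy Σ_{j=1}^M x_j·H_{r(j)} = H. Define the ordered product S(t) = exp(−ix₁H_{r(1)}t)·exp(−ix₂H_{r(2)}t)⋯exp(−ix_M H_{r(M)}t) and the partial products P_j(t) = exp(−ix₁H_{r(1)}t)⋯exp(−ix_{j−1}H_{r(j−1)}t) (with P₁(t) = I). Then for every t ∈ ℝ, S′(t)·S(t)* + iH = −i·Σ_{j=2}^M x_j·( P_j(t)·H_{r(j)}·P_j(t)* − H_{r(j)} ). -/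
/-! The product rule writes `S'` as a sum over `j` of `P_j (-i x_j H_{r j}) Q_j`, where `Q_j` is
the product of the factors from the `j`-th on (the derivative of `exp(-i x_j H_{r j} t)` is
`-i x_j H_{r j}` times the factor itself). Since `S = P_j Q_j` and `Q_j` is unitary,
`S' S* = -i Σ_j x_j P_j H_{r j} P_j*`, and adding `i H = i Σ_j x_j H_{r j}` gives the claim;
the term `j = 0` drops out because `P_0 = 1`. -/

open Matrix

attribute [local instance] Matrix.linftyOpNormedAddCommGroup Matrix.linftyOpNormedRing
  Matrix.linftyOpNormedAlgebra

section ProductRule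

variable {𝕜 𝔸 : Type*} [NontriviallyNormedField 𝕜] [NormedRing 𝔸] [NormedAlgebra 𝕜 𝔸]
  {M : ℕ} {f : Fin M → 𝕜 → 𝔸} {t : 𝕜}

theorem hasDerivAt_list_prod_finRange {f' : Fin M → 𝔸} (hf : ∀ j, HasDerivAt (f j) (f' j) t) :
    HasDerivAt (fun u ↦ ((List.finRange M).map (f · u)).prod)
      (∑ j : Fin M, (((List.finRange M).take j).map (f · t)).prod * f' j *
        (((List.finRange M).drop (j + 1)).map (f · t)).prod) t := by
  have h := HasFDerivAt.list_prod' (l := List.finRange M)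
    (f' := fun j ↦ (1 : 𝕜 →L[𝕜] 𝕜).smulRight (f' j)) fun j _ ↦ (hf j).hasFDerivAt
  rw [hasDerivAt_iff_hasFDerivAt]
  refine h.congr_fderiv ?_
  rw [← Fin.sum_congr' _ List.length_finRange.symm]
  ext
  simp [List.getElem_finRange, mul_assoc]

theorem hasDerivAt_list_prod_finRange_of_hasDerivAt_mul {A : Fin M → 𝔸}
    (hf : ∀ j, HasDerivAt (f j) (A j * f j t) t) :
    HasDerivAt (fun u ↦ ((List.finRange M).map (f · u)).prod)
      (∑ j : Fin M, (((List.finRange M).take j).map (f · t)).prod * A j *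
        (((List.finRange M).drop j).map (f · t)).prod) t := by
  convert hasDerivAt_list_prod_finRange hf using 2 with j
  rw [List.drop_eq_getElem_cons (by simp)]
  simp [mul_assoc]

end ProductRule

theorem Matrix.exp_mem_unitary_of_mem_skewAdjoint {m 𝕂 : Type*} [Fintype m] [DecidableEq m]
    [RCLike 𝕂] {A : Matrix m m 𝕂} (hA : A ∈ skewAdjoint (Matrix m m 𝕂)) :
    NormedSpace.exp A ∈ unitary (Matrix m m 𝕂) := by
  rw [Unitary.mem_iff, star_eq_conjTranspose, ← Matrix.exp_conjTranspose, ← star_eq_conjTranspose,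
    skewAdjoint.mem_iff.mp hA, ← Matrix.exp_add_of_commute _ _ (Commute.refl A).neg_left,
    ← Matrix.exp_add_of_commute _ _ (Commute.refl A).neg_right]
  simp

theorem sum_mul_star_list_prod_finRange {R : Type*} [Semiring R] [StarMul R] {M : ℕ}
    {g : Fin M → R} (hg : ∀ j, g j ∈ unitary R) (A : Fin M → R) :
    (∑ j : Fin M, (((List.finRange M).take j).map g).prod * A j *
        (((List.finRange M).drop j).map g).prod) * star ((List.finRange M).map g).prod =
      ∑ j : Fin M, (((List.finRange M).take j).map g).prod * A j *
        star (((List.finRange M).take j).map g).prod := by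
  rw [Finset.sum_mul]
  refine Finset.sum_congr rfl fun j _ ↦ ?_
  have hdrop : (((List.finRange M).drop j).map g).prod ∈ unitary R :=
    list_prod_mem fun a ha ↦ by
      obtain ⟨i, -, rfl⟩ := List.mem_map.1 ha
      exact hg i
  have hsplit : ((List.finRange M).map g).prod =
      (((List.finRange M).take j).map g).prod * (((List.finRange M).drop j).map g).prod := by
    rw [← List.prod_append, ← List.map_append, List.take_append_drop]
  simp only [hsplit, star_mul, mul_assoc]
  rw [← mul_assoc _ (star _), Unitary.mul_star_self_of_mem hdrop, one_mul]

/-- **Trotter-error generator of a product formula as a sum of conjugated local terms.**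
Given Hermitian matrices `H₁, …, H_K`, indices `r : Fin M → Fin K` and reals `x j` with
`Σ_j x_j • H_{r j} = Hsum`, let `S t` be the ordered product of the factors
`E j t = exp(−i x_j H_{r j} t)` and let `P j t` be the partial product of the first `j`
factors (so `P 0 t = I`).  Then
`S′(t)·S(t)* + i Hsum = −i · Σ_{j ≥ 1} x_j (P j t · H_{r j} · (P j t)* − H_{r j})`. -/
theorem trotter_generator_local_sum
    (n K M : ℕ) (H : Fin K → Matrix (Fin n) (Fin n) ℂ) (hH : ∀ k, (H k).IsHermitian)
    (r : Fin M → Fin K) (x : Fin M → ℝ)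
    (Hsum : Matrix (Fin n) (Fin n) ℂ)
    (hsum : ∑ j : Fin M, (x j : ℂ) • H (r j) = Hsum)
    (E : Fin M → ℝ → Matrix (Fin n) (Fin n) ℂ)
    (hE : ∀ j t, E j t = NormedSpace.exp ((-Complex.I * (x j : ℂ) * (t : ℂ)) • H (r j)))
    (S : ℝ → Matrix (Fin n) (Fin n) ℂ)
    (hS : ∀ t, S t = ((List.finRange M).map fun j => E j t).prod)
    (P : Fin M → ℝ → Matrix (Fin n) (Fin n) ℂ)
    (hP : ∀ j t, P j t = (((List.finRange M).take (j : ℕ)).map fun j' => E j' t).prod)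
    (t : ℝ) :
    deriv S t * (S t)ᴴ + Complex.I • Hsum =
      (-Complex.I) • ∑ j ∈ Finset.univ.filter (fun j : Fin M => 1 ≤ (j : ℕ)),
        (x j : ℂ) • (P j t * H (r j) * (P j t)ᴴ - H (r j)) := by
  set A : Fin M → Matrix (Fin n) (Fin n) ℂ := fun j ↦ (-Complex.I * x j) • H (r j) with hA
  have hE_exp : ∀ j (u : ℝ), E j u = NormedSpace.exp (u • A j) := fun j u ↦ by
    rw [hE, hA, mul_comm _ (u : ℂ), mul_smul, Complex.coe_smul]
  have hA_skew : ∀ j, A j ∈ skewAdjoint _ := fun j ↦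
    (hH (r j)).isSelfAdjoint.smul_mem_skewAdjoint (by simp [skewAdjoint.mem_iff])
  have hE_unitary : ∀ j, E j t ∈ unitary _ := fun j ↦
    hE_exp j t ▸ Matrix.exp_mem_unitary_of_mem_skewAdjoint (skewAdjoint.smul_mem t (hA_skew j))
  have hE_deriv : ∀ j, HasDerivAt (E j) (A j * E j t) t := fun j ↦ by
    rw [hE_exp j t, show E j = _ from funext (hE_exp j)]
    exact hasDerivAt_exp_smul_const' (A j) t
  have hS_deriv : deriv S t = ∑ j : Fin M, (((List.finRange M).take j).map (E · t)).prod * A j *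
      (((List.finRange M).drop j).map (E · t)).prod :=
    (funext hS ▸ hasDerivAt_list_prod_finRange_of_hasDerivAt_mul hE_deriv).deriv
  have hS_gen : deriv S t * (S t)ᴴ = ∑ j, P j t * A j * (P j t)ᴴ := by
    rw [hS_deriv, hS, ← star_eq_conjTranspose, sum_mul_star_list_prod_finRange hE_unitary]
    simp only [hP, star_eq_conjTranspose]
  have hP_zero : ∀ j : Fin M, ¬ 1 ≤ (j : ℕ) → P j t = 1 := fun j hj ↦ by
    simp [hP, Nat.lt_one_iff.mp (not_le.mp hj)]
  rw [Finset.sum_filter_of_ne fun j _ hj ↦ by_contra fun h ↦ hj (by simp [hP_zero j h]), hS_gen,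
    ← hsum]
  simp only [Finset.smul_sum, ← Finset.sum_add_distrib]
  refine Finset.sum_congr rfl fun j _ ↦ ?_
  simp only [hA, smul_mul_assoc, mul_smul_comm]
  module
end

section
/- Let Ω : ℝ → M_n(ℂ) be continuously differentiable. Then t ↦ exp(Ω(t)) is differentiable and exp(−Ω(t)) · (d/dt exp(Ω(t))) = ∫₀¹ exp(−sΩ(t)) · Ω′(t) · exp(sΩ(t)) ds for every t. -/
/-!
Differentiating `s ↦ exp ((1 - s) • (A + B)) * exp (s • A)` and integrating over `[0, 1]` gives
`exp (A + B) - exp A = ∫₀¹ exp ((1 - s) • (A + B)) * B * exp (s • A)`. Replacing `B` by `u • B`,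
dividing by `u` and letting `u → 0` identifies the Fréchet derivative of `exp` at `A` (which exists
because `exp` is analytic) as `B ↦ ∫₀¹ exp ((1 - s) • A) * B * exp (s • A)`. The chain rule and
`exp (-A) * exp ((1 - s) • A) = exp (-(s • A))` then give the formula.
-/

open Matrix MeasureTheory intervalIntegral

attribute [local instance] Matrix.linftyOpNormedAddCommGroup Matrix.linftyOpNormedRing
  Matrix.linftyOpNormedAlgebra

open NormedSpace

section Duhamel

variable {𝔸 : Type*} [NormedRing 𝔸] [NormedAlgebra ℝ 𝔸] [CompleteSpace 𝔸]

-- `exp_continuous` and `exp_add_of_commute` ask for a `NormedAlgebra ℚ 𝔸` instance, which is not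
-- inferred from `NormedAlgebra ℝ 𝔸`; here everything goes through the power series over `ℝ`.
theorem differentiable_exp_of_normedAlgebra_real : Differentiable ℝ (exp : 𝔸 → 𝔸) :=
  fun x => (exp_analytic (𝕂 := ℝ) x).differentiableAt

@[fun_prop]
theorem continuous_exp_of_normedAlgebra_real : Continuous (exp : 𝔸 → 𝔸) :=
  differentiable_exp_of_normedAlgebra_real.continuous

theorem exp_add_eq_exp_add_integral (A B : 𝔸) :
    exp (A + B) = exp A + ∫ s in (0:ℝ)..1, exp ((1 - s) • (A + B)) * B * exp (s • A) := by
  have hderiv (u : ℝ) : HasDerivAt (fun s : ℝ => exp ((1 - s) • (A + B)) * exp (s • A))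
      (-(exp ((1 - u) • (A + B)) * B * exp (u • A))) u := by
    have hleft : HasDerivAt (fun s : ℝ => exp ((1 - s) • (A + B)))
        ((-1 : ℝ) • (exp ((1 - u) • (A + B)) * (A + B))) u :=
      (hasDerivAt_exp_smul_const (A + B) (1 - u)).scomp u
        ((hasDerivAt_id u).const_sub 1)
    refine (hleft.mul (hasDerivAt_exp_smul_const' A u)).congr_deriv ?_
    rw [neg_one_smul]
    noncomm_ring
  have hcont : Continuous fun s : ℝ => exp ((1 - s) • (A + B)) * B * exp (s • A) := by
    fun_prop
  have hFTC := integral_eq_sub_of_hasDerivAt (fun u _ => hderiv u)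
    (hcont.neg.intervalIntegrable 0 1)
  simp only [intervalIntegral.integral_neg, sub_self, zero_smul, exp_zero, one_smul, sub_zero,
    one_mul, mul_one, neg_eq_iff_eq_neg, neg_sub] at hFTC
  rw [hFTC]
  abel

theorem hasDerivAt_exp_add_smul (A B : 𝔸) :
    HasDerivAt (fun u : ℝ => exp (A + u • B))
      (∫ s in (0:ℝ)..1, exp ((1 - s) • A) * B * exp (s • A)) 0 := by
  set g : ℝ → 𝔸 := fun u => ∫ s in (0:ℝ)..1, exp ((1 - s) • (A + u • B)) * B * exp (s • A)
  have hg : Continuous g :=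
    continuous_parametric_intervalIntegral_of_continuous' (by fun_prop) 0 1
  have hslope (u : ℝ) (hu : u ≠ 0) : slope (fun u : ℝ => exp (A + u • B)) 0 u = g u := by
    rw [slope_def_module, exp_add_eq_exp_add_integral A (u • B)]
    simp only [sub_zero, zero_smul, add_zero, add_sub_cancel_left, mul_smul_comm, smul_mul_assoc,
      intervalIntegral.integral_smul, inv_smul_smul₀ hu, g]
  rw [hasDerivAt_iff_tendsto_slope]
  have hg0 : g 0 = ∫ s in (0:ℝ)..1, exp ((1 - s) • A) * B * exp (s • A) := by
    simp only [g, zero_smul, add_zero]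
  rw [← hg0]
  exact (hg.tendsto 0).mono_left nhdsWithin_le_nhds |>.congr'
    (eventually_nhdsWithin_of_forall fun u hu => (hslope u hu).symm)

theorem fderiv_exp_apply (A B : 𝔸) :
    fderiv ℝ exp A B = ∫ s in (0:ℝ)..1, exp ((1 - s) • A) * B * exp (s • A) := by
  have hline : HasDerivAt (fun u : ℝ => A + u • B) B 0 := by
    simpa using ((hasDerivAt_id (0 : ℝ)).smul_const B).const_add A
  have hexp : HasFDerivAt exp (fderiv ℝ exp A) (A + (0 : ℝ) • B) := by
    rw [zero_smul, add_zero]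
    exact (differentiable_exp_of_normedAlgebra_real A).hasFDerivAt
  exact (hexp.comp_hasDerivAt 0 hline).unique (hasDerivAt_exp_add_smul A B)

theorem hasDerivAt_exp_of_hasDerivAt {Ω : ℝ → 𝔸} {Ω' : 𝔸} {t : ℝ} (hΩ : HasDerivAt Ω Ω' t) :
    HasDerivAt (fun x => exp (Ω x))
      (∫ s in (0:ℝ)..1, exp ((1 - s) • Ω t) * Ω' * exp (s • Ω t)) t := by
  rw [← fderiv_exp_apply]
  exact (differentiable_exp_of_normedAlgebra_real (Ω t)).hasFDerivAt.comp_hasDerivAt t hΩ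

theorem exp_neg_mul_integral_exp_mul_exp (A B : 𝔸) :
    exp (-A) * ∫ s in (0:ℝ)..1, exp ((1 - s) • A) * B * exp (s • A) =
      ∫ s in (0:ℝ)..1, exp (-(s • A)) * B * exp (s • A) := by
  have hcont : Continuous fun s : ℝ => exp ((1 - s) • A) * B * exp (s • A) := by fun_prop
  have hpull := (ContinuousLinearMap.mul ℝ 𝔸 (exp (-A))).intervalIntegral_comp_comm
    (hcont.intervalIntegrable (μ := volume) 0 1)
  simp only [ContinuousLinearMap.mul_apply'] at hpull
  rw [← hpull]
  refine intervalIntegral.integral_congr fun s _ => ?_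
  have hexp : exp (-A) * exp ((1 - s) • A) = exp (-(s • A)) := by
    have hball (x : 𝔸) : x ∈ Metric.eball 0 (expSeries ℝ 𝔸).radius :=
      (expSeries_radius_eq_top ℝ 𝔸).symm ▸ edist_lt_top _ _
    rw [← exp_add_of_commute_of_mem_ball ((Commute.refl A).neg_left.smul_right _) (hball _)
      (hball _), sub_smul, one_smul]
    abel_nf
  simp only [← mul_assoc, hexp]

end Duhamel

/-- **Duhamel formula for the derivative of a matrix exponential.**  If `Ω : ℝ → Mₙ(ℂ)` is
continuously differentiable, then `t ↦ exp(Ω(t))` is differentiable and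
`exp(−Ω(t)) · (d/dt exp(Ω(t))) = ∫₀¹ exp(−sΩ(t)) · Ω′(t) · exp(sΩ(t)) ds` for every `t`. -/
theorem deriv_matrix_exp_duhamel
    (n : ℕ) (Ω : ℝ → Matrix (Fin n) (Fin n) ℂ) (hΩ : ContDiff ℝ 1 Ω) (t : ℝ) :
    DifferentiableAt ℝ (fun s => NormedSpace.exp (Ω s)) t ∧
    NormedSpace.exp (-Ω t) * deriv (fun s => NormedSpace.exp (Ω s)) t =
      ∫ s in (0:ℝ)..1,
        NormedSpace.exp (-(s • Ω t)) * deriv Ω t * NormedSpace.exp (s • Ω t) := by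
  have hexp := hasDerivAt_exp_of_hasDerivAt (hΩ.differentiable one_ne_zero t).hasDerivAt
  refine ⟨hexp.differentiableAt, ?_⟩
  rw [show deriv (fun s => NormedSpace.exp (Ω s)) t = _ from hexp.deriv]
  exact exp_neg_mul_integral_exp_mul_exp _ _
end

section
/- Let Ω and O be n×n complex matrices with Ω skew-Hermitian (Ω* = −Ω). Then ‖exp(−Ω)·O·exp(Ω) − O‖ ≤ ‖[Ω, O]‖, where ‖·‖ is the operator norm and [A,B] = AB − BA. -/
/-!
The path `s ↦ exp(-sΩ) O exp(sΩ)` runs from `O` to `exp(-Ω) O exp(Ω)`, and its derivative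
`exp(-sΩ) [O, Ω] exp(sΩ)` is a unitary conjugate of `[O, Ω]`, so it has norm `‖[Ω, O]‖`.
The mean value inequality on `[0, 1]` gives the bound.
-/

open Matrix
open scoped Matrix.Norms.L2Operator
open NormedSpace

section
variable {𝕂 A : Type*} [RCLike 𝕂] [NormedRing A] [NormedAlgebra 𝕂 A] [CompleteSpace A]

theorem hasDerivAt_exp_smul_neg_mul_mul_exp_smul (a b : A) (t : 𝕂) :
    HasDerivAt (fun s : 𝕂 => exp (s • -a) * b * exp (s • a))
      (exp (t • -a) * (b * a - a * b) * exp (t • a)) t := by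
  refine (((hasDerivAt_exp_smul_const (-a) t).mul_const b).mul
    (hasDerivAt_exp_smul_const a t)).congr_deriv ?_
  rw [((Commute.refl a).smul_left t).exp_left.eq]
  noncomm_ring

end

section
variable {A : Type*} [NormedRing A] [StarRing A] [CStarRing A]

theorem CStarRing.norm_star_mul_mul_mem_unitary (x : A) {u : A} (hu : u ∈ unitary A) :
    ‖star u * x * u‖ = ‖x‖ := by
  rw [CStarRing.norm_mul_mem_unitary _ hu, CStarRing.norm_mem_unitary_mul _ (Unitary.star_mem hu)]

end

section
variable {A : Type*} [NormedRing A] [NormedAlgebra ℝ A] [CompleteSpace A] [StarRing A]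
  [CStarRing A] [StarModule ℝ A]

theorem exp_smul_mem_unitary_of_mem_skewAdjoint {a : A} (ha : a ∈ skewAdjoint A) (s : ℝ) :
    exp (s • a) ∈ unitary A :=
  letI : NormedAlgebra ℚ A := .restrictScalars ℚ ℝ A
  exp_mem_unitary_of_mem_skewAdjoint (skewAdjoint.smul_mem s ha)

theorem norm_exp_neg_mul_mul_exp_sub_le_of_mem_skewAdjoint {a : A} (ha : a ∈ skewAdjoint A)
    (b : A) : ‖exp (-a) * b * exp a - b‖ ≤ ‖a * b - b * a‖ := by
  have hstar (s : ℝ) : exp (s • -a) = star (exp (s • a)) := by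
    rw [star_exp, star_smul, star_trivial, skewAdjoint.mem_iff.mp ha]
  have hbound (s : ℝ) : ‖exp (s • -a) * (b * a - a * b) * exp (s • a)‖ ≤ ‖a * b - b * a‖ := by
    rw [hstar, CStarRing.norm_star_mul_mul_mem_unitary _
      (exp_smul_mem_unitary_of_mem_skewAdjoint ha s), norm_sub_rev]
  simpa using norm_image_sub_le_of_norm_deriv_le_segment'
    (fun s _ => (hasDerivAt_exp_smul_neg_mul_mul_exp_smul a b s).hasDerivWithinAt)
    (fun s _ => hbound s) 1 (Set.right_mem_Icc.mpr zero_le_one)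

end

/-- **Frame-rotation error bound.**  If `Ω` is skew-Hermitian (`Ωᴴ = −Ω`), then in the
operator (spectral) norm, `‖exp(−Ω)·O·exp(Ω) − O‖ ≤ ‖[Ω, O]‖`. -/
theorem norm_conj_exp_sub_le_norm_commutator
    (n : ℕ) (Ω O : Matrix (Fin n) (Fin n) ℂ) (hΩ : Ωᴴ = -Ω) :
    ‖NormedSpace.exp (-Ω) * O * NormedSpace.exp Ω - O‖ ≤ ‖Ω * O - O * Ω‖ :=
  norm_exp_neg_mul_mul_exp_sub_le_of_mem_skewAdjoint (skewAdjoint.mem_iff.mpr hΩ) O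
end

section
/- Let P be an n×n complex Hermitian matrix with exp(2πiP) = I, let G ∈ M_n(ℂ), and define 𝔼(G) = ∫₀¹ exp(2πisP)·G·exp(−2πisP) ds and Ω = 2πi·∫₀¹ ∫₀^{s₁} exp(2πis₂P)·(G − 𝔼(G))·exp(−2πis₂P) ds₂ ds₁. Then [Ω, P] = G − 𝔼(G). -/
/-!
Put `A = 2πiP` and `F(s) = e^{sA} Y e^{-sA}` with `Y = G - 𝔼(G)`. Since `F' = [A, F]`, the
fundamental theorem of calculus gives `[A, ∫₀^{s₁} F] = F(s₁) - Y`, and integrating over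
`s₁ ∈ [0, 1]` gives `[∫₀¹∫₀^{s₁} F, A] = Y - ∫₀¹ F`. The last integral vanishes because `e^A = 1`
makes `s ↦ e^{sA} G e^{-sA}` one-periodic, so its mean `𝔼(G)` is fixed by every conjugation
`e^{tA} · e^{-tA}`.
-/

open Matrix MeasureTheory intervalIntegral NormedSpace
open scoped Matrix.Norms.L2Operator

section ExpConj

variable {𝔸 : Type*} [NormedRing 𝔸] [NormedAlgebra ℝ 𝔸]

noncomputable def expConj (A X : 𝔸) (s : ℝ) : 𝔸 := exp (s • A) * X * exp (-s • A)

noncomputable def expConjAverage (A X : 𝔸) : 𝔸 := ∫ s in (0 : ℝ)..1, expConj A X s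

variable (A : 𝔸)

theorem expConj_zero (X : 𝔸) : expConj A X 0 = X := by
  simp [expConj]

theorem expConj_sub (X Y : 𝔸) (s : ℝ) :
    expConj A (X - Y) s = expConj A X s - expConj A Y s := by
  simp only [expConj, mul_sub, sub_mul]

theorem commute_exp_smul (s : ℝ) : Commute A (exp (s • A)) :=
  ((Commute.refl A).smul_right s).exp_right

variable [CompleteSpace 𝔸]

theorem exp_smul_add (s t : ℝ) : exp ((s + t) • A) = exp (s • A) * exp (t • A) := by
  let +nondep : NormedAlgebra ℚ 𝔸 := .restrictScalars ℚ ℝ 𝔸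
  rw [add_smul, NormedSpace.exp_add_of_commute (((Commute.refl A).smul_left s).smul_right t)]

theorem exp_smul_mul_exp_neg_smul (s : ℝ) : exp (s • A) * exp (-s • A) = 1 := by
  rw [← exp_smul_add, add_neg_cancel, zero_smul, exp_zero]

theorem expConj_add (X : 𝔸) (s t : ℝ) :
    expConj A X (s + t) = expConj A (expConj A X t) s := by
  simp only [expConj, neg_add_rev, exp_smul_add, mul_assoc]

theorem expConj_one (hA : exp A = 1) (X : 𝔸) : expConj A X 1 = X := by
  have h := exp_smul_mul_exp_neg_smul A 1
  rw [one_smul, hA, one_mul] at h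
  rw [expConj, one_smul, hA, one_mul, h, mul_one]

theorem expConj_periodic (hA : exp A = 1) (X : 𝔸) : Function.Periodic (expConj A X) 1 := by
  intro s
  rw [expConj_add, expConj_one A hA]

theorem hasDerivAt_expConj (X : 𝔸) (s : ℝ) :
    HasDerivAt (expConj A X) (A * expConj A X s - expConj A X s * A) s := by
  have hV : HasDerivAt (fun t : ℝ => exp (-t • A)) (-(A * exp (-s • A))) s := by
    simpa [Function.comp_def] using
      (hasDerivAt_exp_smul_const' A (-s)).scomp s (hasDerivAt_neg s)
  have h := ((hasDerivAt_exp_smul_const A s).mul_const X).mul hV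
  rw [← (commute_exp_smul A s).eq, (commute_exp_smul A (-s)).eq, mul_neg, ← sub_eq_add_neg] at h
  exact h.congr_deriv (by simp only [expConj, mul_assoc])

theorem continuous_expConj (X : 𝔸) : Continuous (expConj A X) :=
  continuous_iff_continuousAt.2 fun s => (hasDerivAt_expConj A X s).continuousAt

theorem intervalIntegral_commutator {f : ℝ → 𝔸} {a b : ℝ} (hf : IntervalIntegrable f volume a b) :
    ∫ s in a..b, (A * f s - f s * A) = A * (∫ s in a..b, f s) - (∫ s in a..b, f s) * A :=
  (ContinuousLinearMap.mul ℝ 𝔸 A - (ContinuousLinearMap.mul ℝ 𝔸).flip A).intervalIntegral_comp_comm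
    hf

theorem expConj_expConjAverage (hA : exp A = 1) (X : 𝔸) (t : ℝ) :
    expConj A (expConjAverage A X) t = expConjAverage A X := by
  let L : 𝔸 →L[ℝ] 𝔸 := ContinuousLinearMap.mulLeftRight ℝ 𝔸 (exp (t • A)) (exp (-t • A))
  calc expConj A (expConjAverage A X) t
      = ∫ s in (0 : ℝ)..1, L (expConj A X s) :=
        (L.intervalIntegral_comp_comm ((continuous_expConj A X).intervalIntegrable 0 1)).symm
    _ = ∫ s in (0 : ℝ)..1, expConj A X (t + s) := by
        simp only [L, ContinuousLinearMap.mulLeftRight_apply, expConj_add]; rfl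
    _ = ∫ s in t..t + 1, expConj A X s := by rw [integral_comp_add_left, add_zero]
    _ = expConjAverage A X := by
        rw [(expConj_periodic A hA X).intervalIntegral_add_eq t 0, zero_add, expConjAverage]

theorem integral_expConj_sub_expConjAverage (hA : exp A = 1) (X : 𝔸) :
    ∫ s in (0 : ℝ)..1, expConj A (X - expConjAverage A X) s = 0 := by
  simp only [expConj_sub, expConj_expConjAverage A hA]
  rw [integral_sub ((continuous_expConj A X).intervalIntegrable 0 1) intervalIntegrable_const,
    intervalIntegral.integral_const]
  simp [expConjAverage]

theorem commutator_integral_expConj (X : 𝔸) (t : ℝ) :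
    A * (∫ s in (0 : ℝ)..t, expConj A X s) - (∫ s in (0 : ℝ)..t, expConj A X s) * A =
      expConj A X t - X := by
  have hF := continuous_expConj A X
  rw [← intervalIntegral_commutator A (hF.intervalIntegrable 0 t),
    integral_eq_sub_of_hasDerivAt (fun s _ => hasDerivAt_expConj A X s)
      (((continuous_const.mul hF).sub (hF.mul continuous_const)).intervalIntegrable 0 t),
    expConj_zero]

theorem commutator_doubleIntegral_expConj {Y : 𝔸} (hY : ∫ s in (0 : ℝ)..1, expConj A Y s = 0) :
    (∫ s₁ in (0 : ℝ)..1, ∫ s₂ in (0 : ℝ)..s₁, expConj A Y s₂) * A -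
      A * (∫ s₁ in (0 : ℝ)..1, ∫ s₂ in (0 : ℝ)..s₁, expConj A Y s₂) = Y := by
  have hF := continuous_expConj A Y
  have hH : Continuous fun s₁ => ∫ s₂ in (0 : ℝ)..s₁, expConj A Y s₂ :=
    continuous_primitive (fun a b => hF.intervalIntegrable a b) 0
  rw [← neg_sub, ← intervalIntegral_commutator A (hH.intervalIntegrable 0 1)]
  simp only [commutator_integral_expConj]
  rw [integral_sub (hF.intervalIntegrable 0 1) intervalIntegrable_const, hY,
    intervalIntegral.integral_const]
  simp

end ExpConj

theorem schrieffer_wolff_commutator_equation_general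
    (n : ℕ) (P G : Matrix (Fin n) (Fin n) ℂ)
    (hPexp : NormedSpace.exp ((((2 * Real.pi : ℝ) : ℂ) * Complex.I) • P) = 1)
    (EG : Matrix (Fin n) (Fin n) ℂ)
    (hEG : EG = ∫ s in (0:ℝ)..1,
      NormedSpace.exp ((((2 * Real.pi * s : ℝ) : ℂ) * Complex.I) • P) * G *
        NormedSpace.exp ((-((2 * Real.pi * s : ℝ) : ℂ) * Complex.I) • P))
    (Ω : Matrix (Fin n) (Fin n) ℂ)
    (hΩ : Ω = ((((2 * Real.pi : ℝ) : ℂ) * Complex.I)) •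
      ∫ s₁ in (0:ℝ)..1, ∫ s₂ in (0:ℝ)..s₁,
        NormedSpace.exp ((((2 * Real.pi * s₂ : ℝ) : ℂ) * Complex.I) • P) * (G - EG) *
          NormedSpace.exp ((-((2 * Real.pi * s₂ : ℝ) : ℂ) * Complex.I) • P)) :
    Ω * P - P * Ω = G - EG := by
  set c : ℂ := ((2 * Real.pi : ℝ) : ℂ) * Complex.I
  have hsmul (s : ℝ) : (((2 * Real.pi * s : ℝ) : ℂ) * Complex.I) • P = s • c • P := by
    rw [← Complex.coe_smul, smul_smul]; congr 1; push_cast [c]; ring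
  have hsmul_neg (s : ℝ) : (-((2 * Real.pi * s : ℝ) : ℂ) * Complex.I) • P = -s • c • P := by
    rw [← Complex.coe_smul, smul_smul]; congr 1; push_cast [c]; ring
  simp only [hsmul, hsmul_neg] at hEG hΩ
  change EG = expConjAverage (c • P) G at hEG
  change Ω = c • ∫ s₁ in (0:ℝ)..1, ∫ s₂ in (0:ℝ)..s₁, expConj (c • P) (G - EG) s₂ at hΩ
  rw [hΩ, smul_mul_assoc, mul_smul_comm, ← mul_smul_comm, ← smul_mul_assoc]
  subst hEG
  exact commutator_doubleIntegral_expConj _ (integral_expConj_sub_expConjAverage _ hPexp G)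

/-- **Solution of the commutator equation in Schrieffer-Wolff theory.**  Let `P` be
Hermitian with `exp(2πiP) = I`, let `G` be any matrix, set
`𝔼(G) = ∫₀¹ exp(2πisP)·G·exp(−2πisP) ds` and
`Ω = 2πi·∫₀¹∫₀^{s₁} exp(2πis₂P)·(G − 𝔼(G))·exp(−2πis₂P) ds₂ ds₁`.
Then `[Ω, P] = G − 𝔼(G)`. -/
theorem schrieffer_wolff_commutator_equation
    (n : ℕ) (P G : Matrix (Fin n) (Fin n) ℂ) (hP : P.IsHermitian)
    (hPexp : NormedSpace.exp ((((2 * Real.pi : ℝ) : ℂ) * Complex.I) • P) = 1)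
    (EG : Matrix (Fin n) (Fin n) ℂ)
    (hEG : EG = ∫ s in (0:ℝ)..1,
      NormedSpace.exp ((((2 * Real.pi * s : ℝ) : ℂ) * Complex.I) • P) * G *
        NormedSpace.exp ((-((2 * Real.pi * s : ℝ) : ℂ) * Complex.I) • P))
    (Ω : Matrix (Fin n) (Fin n) ℂ)
    (hΩ : Ω = ((((2 * Real.pi : ℝ) : ℂ) * Complex.I)) •
      ∫ s₁ in (0:ℝ)..1, ∫ s₂ in (0:ℝ)..s₁,
        NormedSpace.exp ((((2 * Real.pi * s₂ : ℝ) : ℂ) * Complex.I) • P) * (G - EG) *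
          NormedSpace.exp ((-((2 * Real.pi * s₂ : ℝ) : ℂ) * Complex.I) • P)) :
    Ω * P - P * Ω = G - EG :=
  schrieffer_wolff_commutator_equation_general n P G hPexp EG hEG Ω hΩ
end

section
/- Fix integers d ≥ 1 and r₀ ≥ 0. Let 𝒜 be a finite index set, c : 𝒜 → ℝ≥0 a family of nonnegative weights, and S, S′ : 𝒜 → Finset(ℤ^d) assignments of finite nonempty support sets such that for every α, S′(α) ⊆ { x ∈ ℤ^d : ∃ y ∈ S(α), ‖x − y‖₁ ≤ r₀ }. Then sup_{x ∈ ℤ^d} Σ_{α : x ∈ S′(α)} c(α) ≤ (2r₀+1)^d · sup_{x ∈ ℤ^d} Σ_{α : x ∈ S(α)} c(α). -/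
/-- **Intensive norm under locality-preserving spreading.**  Let `c : 𝒜 → ℝ` be nonnegative
weights with finite nonempty supports `S α ⊆ ℤ^d`, and suppose each `S' α` is contained in
the `r₀`-neighbourhood (in Manhattan distance) of `S α`.  Then
`sup_x Σ_{α : x ∈ S'(α)} c(α) ≤ (2r₀+1)^d · sup_x Σ_{α : x ∈ S(α)} c(α)`. -/
theorem intensive_norm_spreading
    (d : ℕ) (hd : 1 ≤ d) (r₀ : ℕ)
    (ι : Type*) [Fintype ι]
    (c : ι → ℝ) (hc : ∀ α, 0 ≤ c α)
    (S S' : ι → Finset (Fin d → ℤ))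
    (hS : ∀ α, (S α).Nonempty) (hS' : ∀ α, (S' α).Nonempty)
    (hsub : ∀ α, ∀ x ∈ S' α, ∃ y ∈ S α, (∑ i, |x i - y i|) ≤ (r₀ : ℤ)) :
    (⨆ x : Fin d → ℤ, ∑ α ∈ Finset.univ.filter (fun α => x ∈ S' α), c α) ≤
      (2 * (r₀ : ℝ) + 1) ^ d *
        ⨆ x : Fin d → ℤ, ∑ α ∈ Finset.univ.filter (fun α => x ∈ S α), c α := by
  set F : (Fin d → ℤ) → ℝ := fun x => ∑ α ∈ Finset.univ.filter (fun α => x ∈ S α), c α with hF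
  have hbddF : BddAbove (Set.range F) := by
    refine ⟨∑ α, c α, ?_⟩
    rintro _ ⟨x, rfl⟩
    exact Finset.sum_le_sum_of_subset_of_nonneg (Finset.filter_subset _ _) fun i _ _ => hc i
  set M : ℝ := ⨆ x, F x with hM
  have hMnn : 0 ≤ M := by
    refine le_trans ?_ (le_ciSup hbddF (fun _ => (0 : ℤ)))
    exact Finset.sum_nonneg fun i _ => hc i
  have hFleM : ∀ y, F y ≤ M := fun y => le_ciSup hbddF y
  refine ciSup_le fun x => ?_
  set B : Finset (Fin d → ℤ) :=
    Fintype.piFinset (fun i => Finset.Icc (x i - (r₀ : ℤ)) (x i + (r₀ : ℤ))) with hB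
  have hBcard : (B.card : ℝ) = (2 * (r₀ : ℝ) + 1) ^ d := by
    have : B.card = (2 * r₀ + 1) ^ d := by
      rw [hB, Fintype.card_piFinset]
      have h1 : ∀ i : Fin d, (Finset.Icc (x i - (r₀ : ℤ)) (x i + (r₀ : ℤ))).card
          = 2 * r₀ + 1 := by
        intro i
        rw [Int.card_Icc]
        have : x i + (r₀ : ℤ) + 1 - (x i - (r₀ : ℤ)) = (2 * r₀ + 1 : ℕ) := by push_cast; ring
        rw [this, Int.toNat_natCast]
      simp [h1]
    rw [this]; push_cast; ring
  have key : (∑ α ∈ Finset.univ.filter (fun α => x ∈ S' α), c α) ≤ ∑ y ∈ B, F y := by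
    have rhs : ∑ y ∈ B, F y
        = ∑ α, ((B.filter (fun y => y ∈ S α)).card : ℝ) * c α := by
      simp only [hF, Finset.sum_filter]
      rw [Finset.sum_comm]
      congr 1; funext α
      rw [← Finset.sum_filter, Finset.sum_const, nsmul_eq_mul]
    rw [rhs, Finset.sum_filter]
    refine Finset.sum_le_sum fun α _ => ?_
    by_cases hx : x ∈ S' α
    · simp only [hx, if_true]
      obtain ⟨y, hy, hyd⟩ := hsub α x hx
      have hyB : y ∈ B.filter (fun y => y ∈ S α) := by
        rw [Finset.mem_filter]
        refine ⟨?_, hy⟩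
        rw [hB, Fintype.mem_piFinset]
        intro i
        rw [Finset.mem_Icc]
        have h1 : |x i - y i| ≤ (r₀ : ℤ) := by
          refine le_trans ?_ hyd
          exact Finset.single_le_sum (f := fun j => |x j - y j|) (fun j _ => abs_nonneg _) (Finset.mem_univ i)
        rw [abs_le] at h1
        omega
      have hcard : 1 ≤ (B.filter (fun y => y ∈ S α)).card :=
        Finset.card_pos.mpr ⟨y, hyB⟩
      calc c α = 1 * c α := (one_mul _).symm
        _ ≤ ((B.filter (fun y => y ∈ S α)).card : ℝ) * c α := by
            apply mul_le_mul_of_nonneg_right _ (hc α)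
            exact_mod_cast hcard
    · simp only [hx, if_false]
      exact mul_nonneg (Nat.cast_nonneg _) (hc α)
  calc (∑ α ∈ Finset.univ.filter (fun α => x ∈ S' α), c α)
      ≤ ∑ y ∈ B, F y := key
    _ ≤ ∑ _y ∈ B, M := Finset.sum_le_sum fun y _ => hFleM y
    _ = (B.card : ℝ) * M := by rw [Finset.sum_const, nsmul_eq_mul]
    _ = (2 * (r₀ : ℝ) + 1) ^ d * M := by rw [hBcard]
end

section
/- Let 𝒜 be a complex unital Banach algebra, let 𝜏 ∈ (0,1), let Γ₀ > 0, let H : ℝ → 𝒜 be continuous and 𝜏-periodic with ‖H(t)‖ ≤ Γ₀ for all t, and fix an integer p ≥ 1. Define recursively G⁽⁰⁾(t) = H(t); Ω⁽ᑫ⁺¹⁾(t) = −i·∫₀^t ( G⁽ᑫ⁾(s) − Ḡ⁽ᑫ⁾ ) ds with Ḡ⁽ᑫ⁾ = (1/𝜏)∫₀^𝜏 G⁽ᑫ⁾(s) ds; and G⁽ᑫ⁾(t) = Σ_{k=1}^{q} ((−1)^k/k!) Σ_{i₁,…,i_k ≥ 1, i₁+⋯+i_k = q} ad_{Ω^{(i₁)}(t)}∘⋯∘ad_{Ω^{(i_k)}(t)}(H(t))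 + i·Σ_{m=1}^{q} Σ_{k=1}^{q+1−m} ((−1)^{k+1}/(k+1)!) Σ_{i₁,…,i_k ≥ 1, i₁+⋯+i_k = q+1−m} ad_{Ω^{(i₁)}(t)}∘⋯∘ad_{Ω^{(i_k)}(t)}(∂_tΩ^{(m)}(t)), where ad_X(Y) = XY − YX. Then there exist constants Γ₁, …, Γ_p > 0 depending only on p and Γ₀ (and not on 𝜏 or on 𝒜) such that for all t ∈ [0,𝜏] and 0 ≤ q ≤ p: ‖G⁽ᑫ⁾(t)‖ ≤ Γ_q·𝜏^q, ‖Ω⁽ᑫ⁺¹⁾(t)‖ ≤ 2Γ_q·𝜏^{q+1}, and ‖∂_tΩ⁽ᑫ⁺¹⁾(t)‖ ≤ 2Γ_q·𝜏^q; moreover the Floquet-Magnus remainder R⁽ᵖ⁾(t) = Σ_{k=1}^∞ ((−1)^k/k!) Σ_{1 ≤ i₁,…,i_k ≤ p, i₁+⋯+i_k ≥ p+1} ad_{Ω^{(i₁)}(t)}∘⋯∘ad_{Ω^{(i_k)}(t)}(H(t)) − i·Σ_{m=1}^p Σ_{k=1}^∞ ((−1)^k/(k+1)!) Σ_{1 ≤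 i₁,…,i_k ≤ p, i₁+⋯+i_k ≥ p+2−m} ad_{Ω^{(i₁)}(t)}∘⋯∘ad_{Ω^{(i_k)}(t)}(∂_tΩ^{(m)}(t)) converges absolutely and satisfies ‖R⁽ᵖ⁾(t)‖ ≤ C_p·𝜏^{p+1} for a constant C_p depending only on p and Γ₀. -/
open MeasureTheory intervalIntegral

/-- Nested commutator `ad_{X 0} ∘ ad_{X 1} ∘ ⋯ ∘ ad_{X (k−1)}` applied to `Y`,
where `ad_A(B) = A*B − B*A`. -/
def nestedAd {𝒜 : Type*} [Ring 𝒜] {k : ℕ} (X : Fin k → 𝒜) (Y : 𝒜) : 𝒜 :=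
  (List.ofFn X).foldr (fun A Z => A * Z - Z * A) Y

lemma nestedAd_zero {𝒜 : Type*} [Ring 𝒜] (X : Fin 0 → 𝒜) (Y : 𝒜) : nestedAd X Y = Y := by
  simp [nestedAd]

lemma nestedAd_succ {𝒜 : Type*} [Ring 𝒜] {k : ℕ} (X : Fin (k+1) → 𝒜) (Y : 𝒜) :
    nestedAd X Y = X 0 * nestedAd (fun j => X j.succ) Y - nestedAd (fun j => X j.succ) Y * X 0 := by
  simp [nestedAd, List.ofFn_succ]

lemma nestedAd_norm_le {𝒜 : Type*} [NormedRing 𝒜] :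
    ∀ {k : ℕ} (X : Fin k → 𝒜) (Y : 𝒜), ‖nestedAd X Y‖ ≤ (∏ j, (2 * ‖X j‖)) * ‖Y‖ := by
  intro k
  induction k with
  | zero => intro X Y; simp [nestedAd_zero]
  | succ k ih =>
    intro X Y
    rw [nestedAd_succ, Fin.prod_univ_succ]
    set Z := nestedAd (fun j => X j.succ) Y with hZ
    have hp : (0:ℝ) ≤ ∏ j : Fin k, (2 * ‖X j.succ‖) :=
      Finset.prod_nonneg (fun j _ => by positivity)
    calc ‖X 0 * Z - Z * X 0‖ ≤ ‖X 0 * Z‖ + ‖Z * X 0‖ := norm_sub_le _ _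
    _ ≤ ‖X 0‖ * ‖Z‖ + ‖Z‖ * ‖X 0‖ := add_le_add (norm_mul_le _ _) (norm_mul_le _ _)
    _ = 2 * ‖X 0‖ * ‖Z‖ := by ring
    _ ≤ 2 * ‖X 0‖ * ((∏ j : Fin k, (2 * ‖X j.succ‖)) * ‖Y‖) :=
        mul_le_mul_of_nonneg_left (ih _ _) (by positivity)
    _ = 2 * ‖X 0‖ * (∏ j : Fin k, 2 * ‖X j.succ‖) * ‖Y‖ := by ring

lemma continuous_nestedAd {𝒜 : Type*} [NormedRing 𝒜] :
    ∀ {k : ℕ} (X : Fin k → ℝ → 𝒜) (Y : ℝ → 𝒜), (∀ j, Continuous (X j)) → Continuous Y →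
      Continuous (fun t => nestedAd (fun j => X j t) (Y t)) := by
  intro k
  induction k with
  | zero => intro X Y hX hY; simpa [nestedAd_zero] using hY
  | succ k ih =>
    intro X Y hX hY
    simp only [nestedAd_succ]
    have h := ih (fun j => X j.succ) Y (fun j => hX j.succ) hY
    exact ((hX 0).mul h).sub (h.mul (hX 0))

noncomputable def Mrec (Γ₀ : ℝ) : ℕ → ℝ
  | 0 => Γ₀ + 1
  | (q+1) => Mrec Γ₀ q + ((q:ℝ)+1)^2 * (4*((q:ℝ)+2)*Mrec Γ₀ q)^(q+1) * (Γ₀ + 2*Mrec Γ₀ q)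

lemma Mrec_one_le (Γ₀ : ℝ) (h : 0 < Γ₀) : ∀ q, 1 ≤ Mrec Γ₀ q := by
  intro q
  induction q with
  | zero => simp only [Mrec]; linarith
  | succ q ih =>
    have h1 : (0:ℝ) ≤ ((q:ℝ)+1)^2 * (4*((q:ℝ)+2)*Mrec Γ₀ q)^(q+1) * (Γ₀ + 2*Mrec Γ₀ q) := by
      apply mul_nonneg (mul_nonneg (by positivity) (pow_nonneg (by nlinarith) _)) (by nlinarith)
    simp only [Mrec]; linarith

lemma Mrec_mono (Γ₀ : ℝ) (h : 0 < Γ₀) : Monotone (Mrec Γ₀) := by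
  apply monotone_nat_of_le_succ
  intro q
  have ih := Mrec_one_le Γ₀ h q
  have h1 : (0:ℝ) ≤ ((q:ℝ)+1)^2 * (4*((q:ℝ)+2)*Mrec Γ₀ q)^(q+1) * (Γ₀ + 2*Mrec Γ₀ q) := by
    apply mul_nonneg (mul_nonneg (by positivity) (pow_nonneg (by nlinarith) _)) (by nlinarith)
  simp only [Mrec]; linarith

lemma hasDerivAt_primitive_smul {𝒜 : Type} [NormedRing 𝒜] [NormedAlgebra ℂ 𝒜] [CompleteSpace 𝒜]
    (f : ℝ → 𝒜) (hf : Continuous f) (c : ℂ) (t : ℝ) :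
    HasDerivAt (fun u => c • ∫ s in (0:ℝ)..u, f s) (c • f t) t := by
  have h : HasDerivAt (fun u => ∫ s in (0:ℝ)..u, f s) (f t) t :=
    integral_hasDerivAt_right (hf.intervalIntegrable _ _)
      (hf.stronglyMeasurableAtFilter _ _) hf.continuousAt
  exact h.const_smul c

lemma prod_ad_bound {𝒜 : Type*} [NormedRing 𝒜] {k : ℕ} (X : Fin k → 𝒜) (Y : 𝒜)
    (L τ CY : ℝ) (hL : 0 ≤ L) (hτ : 0 ≤ τ) (e : Fin k → ℕ)
    (hX : ∀ j, ‖X j‖ ≤ 2 * L * τ ^ (e j)) (hY : ‖Y‖ ≤ CY) :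
    ‖nestedAd X Y‖ ≤ (4*L)^k * τ ^ (∑ j, e j) * CY := by
  have h1 : ‖nestedAd X Y‖ ≤ (∏ j, (2 * ‖X j‖)) * ‖Y‖ := nestedAd_norm_le X Y
  have hCY : 0 ≤ CY := le_trans (norm_nonneg _) hY
  have h2 : (∏ j, (2 * ‖X j‖)) ≤ ∏ j, (4*L*τ^(e j)) := by
    apply Finset.prod_le_prod (fun j _ => by positivity)
    intro j _
    have := hX j
    linarith
  have h3 : (∏ j : Fin k, (4*L*τ^(e j))) = (4*L)^k * τ ^ (∑ j, e j) := by
    rw [Finset.prod_mul_distrib, Finset.prod_const, Finset.prod_pow_eq_pow_sum,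
      Finset.card_univ, Fintype.card_fin]
  calc ‖nestedAd X Y‖ ≤ (∏ j, (2 * ‖X j‖)) * ‖Y‖ := h1
  _ ≤ (∏ j, (4*L*τ^(e j))) * CY := by
      apply mul_le_mul h2 hY (norm_nonneg _) (Finset.prod_nonneg (fun j _ => by positivity))
  _ = (4*L)^k * τ ^ (∑ j, e j) * CY := by rw [h3]

lemma norm_sum_le_card_mul {𝒜 : Type*} [SeminormedAddCommGroup 𝒜] {ι : Type*} (S : Finset ι)
    (f : ι → 𝒜) (B : ℝ) (h : ∀ i ∈ S, ‖f i‖ ≤ B) (n : ℕ) (hcard : S.card ≤ n) (hB : 0 ≤ B) :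
    ‖∑ i ∈ S, f i‖ ≤ (n:ℝ) * B := by
  calc ‖∑ i ∈ S, f i‖ ≤ ∑ i ∈ S, ‖f i‖ := norm_sum_le _ _
  _ ≤ S.card • B := Finset.sum_le_card_nsmul _ _ _ h
  _ = (S.card : ℝ) * B := nsmul_eq_mul _ _
  _ ≤ (n:ℝ) * B := mul_le_mul_of_nonneg_right (by exact_mod_cast hcard) hB

lemma sum_le_card_mul {ι : Type*} (S : Finset ι) (f : ι → ℝ) (B : ℝ)
    (h : ∀ i ∈ S, f i ≤ B) (n : ℕ) (hcard : S.card ≤ n) (hB : 0 ≤ B) :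
    ∑ i ∈ S, f i ≤ (n:ℝ) * B := by
  calc ∑ i ∈ S, f i ≤ S.card • B := Finset.sum_le_card_nsmul _ _ _ h
  _ = (S.card : ℝ) * B := nsmul_eq_mul _ _
  _ ≤ (n:ℝ) * B := mul_le_mul_of_nonneg_right (by exact_mod_cast hcard) hB

lemma card_filter_antidiagonal_le (k q : ℕ) (P : (Fin k → ℕ) → Prop) [DecidablePred P] :
    ((Finset.Nat.antidiagonalTuple k q).filter P).card ≤ (q+1)^k := by
  calc ((Finset.Nat.antidiagonalTuple k q).filter P).card
      ≤ (Fintype.piFinset fun _ : Fin k => Finset.range (q+1)).card := by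
        apply Finset.card_le_card
        intro i hi
        rw [Finset.mem_filter] at hi
        have hsum := Finset.Nat.mem_antidiagonalTuple.1 hi.1
        rw [Fintype.mem_piFinset]
        intro j
        rw [Finset.mem_range]
        have : i j ≤ q := hsum ▸ Finset.single_le_sum (f := i) (fun _ _ => Nat.zero_le _) (Finset.mem_univ j)
        omega
  _ = (q+1)^k := by rw [Fintype.card_piFinset]; simp

lemma card_filter_piFinset_le (k p : ℕ) (P : (Fin k → ℕ) → Prop) [DecidablePred P] :
    ((Fintype.piFinset fun _ : Fin k => Finset.Icc 1 p).filter P).card ≤ p^k := by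
  calc ((Fintype.piFinset fun _ : Fin k => Finset.Icc 1 p).filter P).card
      ≤ (Fintype.piFinset fun _ : Fin k => Finset.Icc 1 p).card := Finset.card_filter_le _ _
  _ = p^k := by rw [Fintype.card_piFinset]; simp [Nat.card_Icc]

lemma norm_coeff_eq (a n : ℕ) : ‖((-1:ℂ)^a / (n.factorial : ℂ))‖ = 1 / (n.factorial : ℝ) := by
  rw [norm_div, norm_pow, norm_neg, norm_one, one_pow, Complex.norm_natCast]

lemma norm_coeff_le_one (a n : ℕ) : ‖((-1:ℂ)^a / (n.factorial : ℂ))‖ ≤ 1 := by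
  rw [norm_coeff_eq]
  rw [div_le_one (by exact_mod_cast n.factorial_pos)]
  exact_mod_cast n.factorial_pos

set_option maxHeartbeats 2000000 in
/-- **Bounds on the Floquet-Magnus expansion and its remainder.**  For every `p ≥ 1` and
`Γ₀ > 0` there are constants `Γ₁, …` and `C > 0`, depending only on `p` and `Γ₀`, such that
for every complex unital Banach algebra `𝒜`, every `τ ∈ (0,1)` and every continuous
`τ`-periodic drive `H : ℝ → 𝒜` with `‖H t‖ ≤ Γ₀`, the terms `G⁽ᑫ⁾, Ω⁽ᑫ⁾` of the
Floquet-Magnus recursion satisfy `‖G⁽ᑫ⁾(t)‖ ≤ Γ_q τ^q`, `‖Ω⁽ᑫ⁺¹⁾(t)‖ ≤ 2Γ_q τ^{q+1}`,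
`‖∂_tΩ⁽ᑫ⁺¹⁾(t)‖ ≤ 2Γ_q τ^q` for `0 ≤ q ≤ p` and `t ∈ [0,τ]`, and the remainder series
`R⁽ᵖ⁾(t)` converges absolutely with `‖R⁽ᵖ⁾(t)‖ ≤ C τ^{p+1}`. -/
theorem floquet_magnus_remainder_bounds
    (p : ℕ) (hp : 1 ≤ p) (Γ₀ : ℝ) (hΓ₀ : 0 < Γ₀) :
    ∃ (Γ : ℕ → ℝ) (C : ℝ), (∀ q, 0 < Γ q) ∧ 0 < C ∧
      ∀ (𝒜 : Type) [NormedRing 𝒜] [NormedAlgebra ℂ 𝒜] [CompleteSpace 𝒜]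
        (τ : ℝ), τ ∈ Set.Ioo (0 : ℝ) 1 →
        ∀ (H : ℝ → 𝒜), Continuous H → (∀ t, H (t + τ) = H t) → (∀ t, ‖H t‖ ≤ Γ₀) →
        ∀ (G Ω : ℕ → ℝ → 𝒜),
          (∀ t, G 0 t = H t) →
          (∀ q t, Ω (q + 1) t =
            (-Complex.I) • ∫ s in (0:ℝ)..t, (G q s - τ⁻¹ • ∫ u in (0:ℝ)..τ, G q u)) →
          (∀ q, 1 ≤ q → q ≤ p → ∀ t, G q t =
            (∑ k ∈ Finset.Icc 1 q, ((-1 : ℂ) ^ k / (k.factorial : ℂ)) •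
              ∑ i ∈ (Finset.Nat.antidiagonalTuple k q).filter (fun i => ∀ j, 1 ≤ i j),
                nestedAd (fun j => Ω (i j) t) (H t)) +
            Complex.I • ∑ m ∈ Finset.Icc 1 q, ∑ k ∈ Finset.Icc 1 (q + 1 - m),
              ((-1 : ℂ) ^ (k + 1) / ((k + 1).factorial : ℂ)) •
                ∑ i ∈ (Finset.Nat.antidiagonalTuple k (q + 1 - m)).filter
                    (fun i => ∀ j, 1 ≤ i j),
                  nestedAd (fun j => Ω (i j) t) (deriv (Ω m) t)) →
          ∀ (R : ℕ → ℝ → 𝒜),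
            (∀ k t, R k t =
              ((-1 : ℂ) ^ k / (k.factorial : ℂ)) •
                ∑ i ∈ (Fintype.piFinset fun _ : Fin k => Finset.Icc 1 p).filter
                    (fun i => p + 1 ≤ ∑ j, i j),
                  nestedAd (fun j => Ω (i j) t) (H t) -
              Complex.I • ∑ m ∈ Finset.Icc 1 p,
                ((-1 : ℂ) ^ k / ((k + 1).factorial : ℂ)) •
                  ∑ i ∈ (Fintype.piFinset fun _ : Fin k => Finset.Icc 1 p).filter
                      (fun i => p + 2 - m ≤ ∑ j, i j),
                    nestedAd (fun j => Ω (i j) t) (deriv (Ω m) t)) →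
            (∀ q ≤ p, ∀ t ∈ Set.Icc (0:ℝ) τ,
              ‖G q t‖ ≤ Γ q * τ ^ q ∧
              ‖Ω (q + 1) t‖ ≤ 2 * Γ q * τ ^ (q + 1) ∧
              ‖deriv (Ω (q + 1)) t‖ ≤ 2 * Γ q * τ ^ q) ∧
            (∀ t ∈ Set.Icc (0:ℝ) τ,
              Summable (fun k : ℕ => ‖R k t‖) ∧
              ‖∑' k : ℕ, R k t‖ ≤ C * τ ^ (p + 1)) := by
  classical
  have hM1 : ∀ q, 1 ≤ Mrec Γ₀ q := Mrec_one_le Γ₀ hΓ₀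
  have hMmono : Monotone (Mrec Γ₀) := Mrec_mono Γ₀ hΓ₀
  set L : ℝ := Mrec Γ₀ p with hLdef
  have hL1 : 1 ≤ L := hM1 p
  have hL0 : 0 < L := lt_of_lt_of_le one_pos hL1
  set x : ℝ := 4 * L * (p:ℝ) with hxdef
  have hx0 : 0 ≤ x := by positivity
  set S : ℝ := ∑' k : ℕ, x ^ k / (k.factorial : ℝ) with hSdef
  have hS0 : 0 ≤ S := tsum_nonneg (fun k => by positivity)
  set D : ℝ := Γ₀ + 2 * L * (p:ℝ) with hDdef
  have hD0 : 0 < D := by positivity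
  refine ⟨Mrec Γ₀, D * S + 1, fun q => lt_of_lt_of_le one_pos (hM1 q),
    by nlinarith [mul_nonneg hD0.le hS0], ?_⟩
  intro 𝒜 _ _ _ τ hτ H Hcont Hper HB G Ω hG0 hΩ hG R hR
  obtain ⟨hτ0, hτ1⟩ := hτ
  -- facts about Ω (q+1) given facts about G q
  have omg : ∀ q : ℕ, Continuous (G q) →
      (∀ t ∈ Set.Icc (0:ℝ) τ, ‖G q t‖ ≤ Mrec Γ₀ q * τ ^ q) →
      Continuous (Ω (q+1)) ∧
      deriv (Ω (q+1)) = (fun t => (-Complex.I) • (G q t - τ⁻¹ • ∫ u in (0:ℝ)..τ, G q u)) ∧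
      Continuous (deriv (Ω (q+1))) ∧
      (∀ t ∈ Set.Icc (0:ℝ) τ, ‖Ω (q+1) t‖ ≤ 2 * Mrec Γ₀ q * τ ^ (q+1) ∧
        ‖deriv (Ω (q+1)) t‖ ≤ 2 * Mrec Γ₀ q * τ ^ q) := by
    intro q hc hb
    have hMq0 : (0:ℝ) < Mrec Γ₀ q := lt_of_lt_of_le one_pos (hM1 q)
    set a : 𝒜 := τ⁻¹ • ∫ u in (0:ℝ)..τ, G q u with ha_def
    have hfc : Continuous (fun s => G q s - a) := hc.sub continuous_const
    have hD : ∀ t, HasDerivAt (Ω (q+1)) ((-Complex.I) • (G q t - a)) t := by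
      intro t
      have h := hasDerivAt_primitive_smul (fun s => G q s - a) hfc (-Complex.I) t
      have heq : Ω (q+1) = fun u => (-Complex.I) • ∫ s in (0:ℝ)..u, (G q s - a) :=
        funext fun u => hΩ q u
      rw [heq]
      exact h
    have hderiv : deriv (Ω (q+1)) = fun t => (-Complex.I) • (G q t - a) :=
      funext fun t => (hD t).deriv
    have hΩc : Continuous (Ω (q+1)) :=
      continuous_iff_continuousAt.mpr fun t => (hD t).differentiableAt.continuousAt
    have hIa : ‖(-Complex.I)‖ = 1 := by rw [norm_neg, Complex.norm_I]
    have hanorm : ‖a‖ ≤ Mrec Γ₀ q * τ ^ q := by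
      have h1 : ‖∫ u in (0:ℝ)..τ, G q u‖ ≤ (Mrec Γ₀ q * τ ^ q) * |τ - 0| := by
        apply intervalIntegral.norm_integral_le_of_norm_le_const
        intro s hs
        apply hb
        rw [Set.uIoc_of_le hτ0.le] at hs
        exact ⟨hs.1.le, hs.2⟩
      rw [sub_zero, abs_of_pos hτ0] at h1
      rw [ha_def, norm_smul, Real.norm_eq_abs, abs_of_pos (inv_pos.mpr hτ0)]
      calc τ⁻¹ * ‖∫ u in (0:ℝ)..τ, G q u‖ ≤ τ⁻¹ * (Mrec Γ₀ q * τ ^ q * τ) :=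
            mul_le_mul_of_nonneg_left h1 (by positivity)
      _ = Mrec Γ₀ q * τ ^ q := by field_simp
    have hsub : ∀ s ∈ Set.Icc (0:ℝ) τ, ‖G q s - a‖ ≤ 2 * Mrec Γ₀ q * τ ^ q := by
      intro s hs
      have := hb s hs
      calc ‖G q s - a‖ ≤ ‖G q s‖ + ‖a‖ := norm_sub_le _ _
      _ ≤ 2 * Mrec Γ₀ q * τ ^ q := by linarith
    refine ⟨hΩc, hderiv, by rw [hderiv]; exact hfc.const_smul _, fun t ht => ⟨?_, ?_⟩⟩
    · rw [hΩ q t, norm_smul, hIa, one_mul]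
      have h1 : ‖∫ s in (0:ℝ)..t, (G q s - a)‖ ≤ (2 * Mrec Γ₀ q * τ ^ q) * |t - 0| := by
        apply intervalIntegral.norm_integral_le_of_norm_le_const
        intro s hs
        apply hsub
        rw [Set.uIoc_of_le ht.1] at hs
        exact ⟨hs.1.le, le_trans hs.2 ht.2⟩
      rw [sub_zero, abs_of_nonneg ht.1] at h1
      calc ‖∫ s in (0:ℝ)..t, (G q s - a)‖ ≤ 2 * Mrec Γ₀ q * τ ^ q * t := h1
      _ ≤ 2 * Mrec Γ₀ q * τ ^ q * τ := by
          apply mul_le_mul_of_nonneg_left ht.2 (by positivity)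
      _ = 2 * Mrec Γ₀ q * τ ^ (q+1) := by ring
    · rw [congrFun hderiv t, norm_smul, hIa, one_mul]
      exact hsub t ht
  -- main induction on q : bound and continuity for G q
  have key : ∀ q, q ≤ p → Continuous (G q) ∧
      (∀ t ∈ Set.Icc (0:ℝ) τ, ‖G q t‖ ≤ Mrec Γ₀ q * τ ^ q) := by
    intro q
    induction q using Nat.strong_induction_on with
    | _ q ih =>
      intro hqp
      match q, ih, hqp with
      | 0, ih, hqp =>
        constructor
        · rw [funext hG0]; exact Hcont
        · intro t ht
          rw [hG0 t]
          have : Mrec Γ₀ 0 = Γ₀ + 1 := rfl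
          rw [this, pow_zero, mul_one]
          linarith [HB t]
      | (q'+1), ih, hqp =>
        have hq1 : 1 ≤ q'+1 := Nat.succ_le_succ (Nat.zero_le _)
        -- Ω facts for 1 ≤ i ≤ q'+1
        have hΩf : ∀ i, 1 ≤ i → i ≤ q'+1 → Continuous (Ω i) ∧ Continuous (deriv (Ω i)) ∧
            ∀ t ∈ Set.Icc (0:ℝ) τ, ‖Ω i t‖ ≤ 2 * Mrec Γ₀ (i-1) * τ^i ∧
              ‖deriv (Ω i) t‖ ≤ 2 * Mrec Γ₀ (i-1) * τ^(i-1) := by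
          intro i hi1 hiq
          obtain ⟨i', rfl⟩ : ∃ i', i = i'+1 := ⟨i-1, by omega⟩
          obtain ⟨hc, hb⟩ := ih i' (by omega) (by omega)
          obtain ⟨hΩc, _, hdc, hbd⟩ := omg i' hc hb
          refine ⟨hΩc, hdc, fun t ht => ?_⟩
          simpa using hbd t ht
        -- continuity of G (q'+1)
        have hGc : Continuous (G (q'+1)) := by
          rw [funext (hG (q'+1) hq1 hqp)]
          apply Continuous.add
          · apply continuous_finset_sum
            intro k _
            apply Continuous.const_smul
            apply continuous_finset_sum
            intro i hi
            have hi' := Finset.mem_filter.1 hi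
            apply continuous_nestedAd (fun j => Ω (i j)) H ?_ Hcont
            intro j
            have hjq : i j ≤ q'+1 := by
              have hsum := Finset.Nat.mem_antidiagonalTuple.1 hi'.1
              have h2j := hsum ▸ Finset.single_le_sum (f := i) (fun _ _ => Nat.zero_le _) (Finset.mem_univ j)
              omega
            exact (hΩf (i j) (hi'.2 j) hjq).1
          · apply Continuous.const_smul
            apply continuous_finset_sum
            intro m hm
            obtain ⟨hm1, hmq⟩ := Finset.mem_Icc.1 hm
            apply continuous_finset_sum
            intro k _
            apply Continuous.const_smul
            apply continuous_finset_sum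
            intro i hi
            have hi' := Finset.mem_filter.1 hi
            apply continuous_nestedAd (fun j => Ω (i j)) (deriv (Ω m)) ?_
              ((hΩf m hm1 (by omega)).2.1)
            intro j
            have hjq : i j ≤ q'+1 := by
              have hsum := Finset.Nat.mem_antidiagonalTuple.1 hi'.1
              have h2j := hsum ▸ Finset.single_le_sum (f := i) (fun _ _ => Nat.zero_le _) (Finset.mem_univ j)
              omega
            exact (hΩf (i j) (hi'.2 j) hjq).1
        refine ⟨hGc, ?_⟩
        intro t ht
        set Q : ℕ := q'+1 with hQdef
        set Lq : ℝ := Mrec Γ₀ q' with hLqdef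
        have hLq1 : 1 ≤ Lq := hM1 q'
        have hLq0 : 0 < Lq := lt_of_lt_of_le one_pos hLq1
        set X : ℝ := ((Q:ℝ)+1) * (4*Lq) with hXdef
        have hQ1 : (1:ℝ) ≤ (Q:ℝ) := by exact_mod_cast hq1
        have hX1 : 1 ≤ X := by nlinarith
        have hX0 : 0 < X := lt_of_lt_of_le one_pos hX1
        -- per-tuple bound
        have tup : ∀ (k : ℕ) (i : Fin k → ℕ) (Y : 𝒜) (CY : ℝ), (∀ j, 1 ≤ i j) →
            (∀ j, i j ≤ Q) → ‖Y‖ ≤ CY →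
            ‖nestedAd (fun j => Ω (i j) t) Y‖ ≤ (4*Lq)^k * τ ^ (∑ j, i j) * CY := by
          intro k i Y CY h1 h2 hY
          apply prod_ad_bound _ _ Lq τ CY hLq0.le hτ0.le i ?_ hY
          intro j
          have hb := ((hΩf (i j) (h1 j) (h2 j)).2.2 t ht).1
          have hmm : Mrec Γ₀ (i j - 1) ≤ Lq := by
            rw [hLqdef]
            have h2j := h2 j
            exact hMmono (by omega)
          have hτp : (0:ℝ) ≤ τ ^ (i j) := by positivity
          calc ‖Ω (i j) t‖ ≤ 2 * Mrec Γ₀ (i j - 1) * τ ^ (i j) := hb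
          _ ≤ 2 * Lq * τ ^ (i j) := by nlinarith
        rw [hG Q hq1 hqp t]
        have hBnn : 0 ≤ X^Q * τ^Q * Γ₀ := by positivity
        -- first sum
        have hA : ‖∑ k ∈ Finset.Icc 1 Q, ((-1 : ℂ) ^ k / (k.factorial : ℂ)) •
              ∑ i ∈ (Finset.Nat.antidiagonalTuple k Q).filter (fun i => ∀ j, 1 ≤ i j),
                nestedAd (fun j => Ω (i j) t) (H t)‖ ≤ (Q:ℝ) * (X^Q * τ^Q * Γ₀) := by
          calc ‖∑ k ∈ Finset.Icc 1 Q, ((-1 : ℂ) ^ k / (k.factorial : ℂ)) •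
              ∑ i ∈ (Finset.Nat.antidiagonalTuple k Q).filter (fun i => ∀ j, 1 ≤ i j),
                nestedAd (fun j => Ω (i j) t) (H t)‖
              ≤ ∑ k ∈ Finset.Icc 1 Q, ‖((-1 : ℂ) ^ k / (k.factorial : ℂ)) •
                ∑ i ∈ (Finset.Nat.antidiagonalTuple k Q).filter (fun i => ∀ j, 1 ≤ i j),
                  nestedAd (fun j => Ω (i j) t) (H t)‖ := norm_sum_le _ _
          _ ≤ (Finset.Icc 1 Q).card • (X^Q * τ^Q * Γ₀) := by
              apply Finset.sum_le_card_nsmul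
              intro k hk
              obtain ⟨hk1, hkQ⟩ := Finset.mem_Icc.1 hk
              have hSk : ‖∑ i ∈ (Finset.Nat.antidiagonalTuple k Q).filter (fun i => ∀ j, 1 ≤ i j),
                  nestedAd (fun j => Ω (i j) t) (H t)‖
                  ≤ ((Q+1)^k : ℕ) * ((4*Lq)^k * τ^Q * Γ₀) := by
                apply norm_sum_le_card_mul _ _ _ ?_ _ (card_filter_antidiagonal_le k Q _)
                  (by positivity)
                intro i hi
                have hi' := Finset.mem_filter.1 hi
                have hsum := Finset.Nat.mem_antidiagonalTuple.1 hi'.1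
                have h2 : ∀ j, i j ≤ Q := by
                  intro j
                  have h2j := hsum ▸ Finset.single_le_sum (f := i) (fun _ _ => Nat.zero_le _)
                    (Finset.mem_univ j)
                  omega
                have := tup k i (H t) Γ₀ hi'.2 h2 (HB t)
                rwa [hsum] at this
              calc ‖((-1 : ℂ) ^ k / (k.factorial : ℂ)) •
                  ∑ i ∈ (Finset.Nat.antidiagonalTuple k Q).filter (fun i => ∀ j, 1 ≤ i j),
                    nestedAd (fun j => Ω (i j) t) (H t)‖
                  = ‖((-1 : ℂ) ^ k / (k.factorial : ℂ))‖ * ‖∑ i ∈ (Finset.Nat.antidiagonalTuple k Q).filter (fun i => ∀ j, 1 ≤ i j),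
                    nestedAd (fun j => Ω (i j) t) (H t)‖ := norm_smul _ _
              _ ≤ 1 * (((Q+1)^k : ℕ) * ((4*Lq)^k * τ^Q * Γ₀)) :=
                  mul_le_mul (norm_coeff_le_one _ _) hSk (norm_nonneg _) zero_le_one
              _ = X^k * (τ^Q * Γ₀) := by
                  have hXk : (((Q+1)^k : ℕ) : ℝ) * ((4*Lq)^k) = X^k := by
                    rw [hXdef, Nat.cast_pow, Nat.cast_add, Nat.cast_one, ← mul_pow]
                  rw [← hXk]; ring
              _ ≤ X^Q * (τ^Q * Γ₀) := by
                  have hXkQ : X^k ≤ X^Q := pow_le_pow_right₀ hX1 hkQ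
                  exact mul_le_mul_of_nonneg_right hXkQ (by positivity)
              _ = X^Q * τ^Q * Γ₀ := by ring
          _ ≤ (Q:ℝ) * (X^Q * τ^Q * Γ₀) := by
              rw [nsmul_eq_mul]
              apply mul_le_mul_of_nonneg_right ?_ hBnn
              rw [Nat.card_Icc]
              exact_mod_cast (by omega : Q + 1 - 1 ≤ Q)
        -- second sum
        have hB2 : ‖∑ m ∈ Finset.Icc 1 Q, ∑ k ∈ Finset.Icc 1 (Q + 1 - m),
              ((-1 : ℂ) ^ (k + 1) / ((k + 1).factorial : ℂ)) •
                ∑ i ∈ (Finset.Nat.antidiagonalTuple k (Q + 1 - m)).filter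
                    (fun i => ∀ j, 1 ≤ i j),
                  nestedAd (fun j => Ω (i j) t) (deriv (Ω m) t)‖
            ≤ (Q:ℝ) * ((Q:ℝ) * (X^Q * τ^Q * (2*Lq))) := by
          have hBnn2 : (0:ℝ) ≤ (Q:ℝ) * (X^Q * τ^Q * (2*Lq)) := by positivity
          calc ‖∑ m ∈ Finset.Icc 1 Q, ∑ k ∈ Finset.Icc 1 (Q + 1 - m),
              ((-1 : ℂ) ^ (k + 1) / ((k + 1).factorial : ℂ)) •
                ∑ i ∈ (Finset.Nat.antidiagonalTuple k (Q + 1 - m)).filter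
                    (fun i => ∀ j, 1 ≤ i j),
                  nestedAd (fun j => Ω (i j) t) (deriv (Ω m) t)‖
              ≤ ∑ m ∈ Finset.Icc 1 Q, ‖∑ k ∈ Finset.Icc 1 (Q + 1 - m),
              ((-1 : ℂ) ^ (k + 1) / ((k + 1).factorial : ℂ)) •
                ∑ i ∈ (Finset.Nat.antidiagonalTuple k (Q + 1 - m)).filter
                    (fun i => ∀ j, 1 ≤ i j),
                  nestedAd (fun j => Ω (i j) t) (deriv (Ω m) t)‖ := norm_sum_le _ _
          _ ≤ (Finset.Icc 1 Q).card • ((Q:ℝ) * (X^Q * τ^Q * (2*Lq))) := by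
              apply Finset.sum_le_card_nsmul
              intro m hm
              obtain ⟨hm1, hmQ⟩ := Finset.mem_Icc.1 hm
              have hdb : ‖deriv (Ω m) t‖ ≤ 2 * Lq * τ ^ (m-1) := by
                have hb := ((hΩf m hm1 hmQ).2.2 t ht).2
                have hmm : Mrec Γ₀ (m - 1) ≤ Lq := by
                  rw [hLqdef]; exact hMmono (by omega)
                have hτp : (0:ℝ) ≤ τ ^ (m-1) := by positivity
                calc ‖deriv (Ω m) t‖ ≤ 2 * Mrec Γ₀ (m-1) * τ ^ (m-1) := hb
                _ ≤ 2 * Lq * τ ^ (m-1) := by nlinarith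
              calc ‖∑ k ∈ Finset.Icc 1 (Q + 1 - m),
                  ((-1 : ℂ) ^ (k + 1) / ((k + 1).factorial : ℂ)) •
                    ∑ i ∈ (Finset.Nat.antidiagonalTuple k (Q + 1 - m)).filter
                        (fun i => ∀ j, 1 ≤ i j),
                      nestedAd (fun j => Ω (i j) t) (deriv (Ω m) t)‖
                  ≤ ∑ k ∈ Finset.Icc 1 (Q + 1 - m), ‖((-1 : ℂ) ^ (k + 1) / ((k + 1).factorial : ℂ)) •
                    ∑ i ∈ (Finset.Nat.antidiagonalTuple k (Q + 1 - m)).filter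
                        (fun i => ∀ j, 1 ≤ i j),
                      nestedAd (fun j => Ω (i j) t) (deriv (Ω m) t)‖ := norm_sum_le _ _
              _ ≤ (Finset.Icc 1 (Q+1-m)).card • (X^Q * τ^Q * (2*Lq)) := by
                  apply Finset.sum_le_card_nsmul
                  intro k hk
                  obtain ⟨hk1, hkQ'⟩ := Finset.mem_Icc.1 hk
                  have hkQ : k ≤ Q := by omega
                  have hSk : ‖∑ i ∈ (Finset.Nat.antidiagonalTuple k (Q+1-m)).filter
                        (fun i => ∀ j, 1 ≤ i j),
                      nestedAd (fun j => Ω (i j) t) (deriv (Ω m) t)‖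
                      ≤ ((Q+1)^k : ℕ) * ((4*Lq)^k * τ^Q * (2*Lq)) := by
                    apply norm_sum_le_card_mul _ _ _ ?_ _
                      (le_trans (card_filter_antidiagonal_le k (Q+1-m) _)
                        (Nat.pow_le_pow_left (by omega) k)) (by positivity)
                    intro i hi
                    have hi' := Finset.mem_filter.1 hi
                    have hsum := Finset.Nat.mem_antidiagonalTuple.1 hi'.1
                    have h2 : ∀ j, i j ≤ Q := by
                      intro j
                      have h2j := hsum ▸ Finset.single_le_sum (f := i) (fun _ _ => Nat.zero_le _)
                        (Finset.mem_univ j)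
                      omega
                    have := tup k i (deriv (Ω m) t) (2 * Lq * τ ^ (m-1)) hi'.2 h2 hdb
                    rw [hsum] at this
                    calc ‖nestedAd (fun j => Ω (i j) t) (deriv (Ω m) t)‖
                        ≤ (4*Lq)^k * τ^(Q+1-m) * (2 * Lq * τ ^ (m-1)) := this
                    _ = (4*Lq)^k * τ^Q * (2*Lq) := by
                        rw [show (4*Lq)^k * τ^(Q+1-m) * (2 * Lq * τ ^ (m-1))
                            = (4*Lq)^k * (τ^(Q+1-m) * τ^(m-1)) * (2*Lq) by ring,
                          ← pow_add, (by omega : Q+1-m+(m-1) = Q)]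
                  calc ‖((-1 : ℂ) ^ (k + 1) / ((k + 1).factorial : ℂ)) •
                      ∑ i ∈ (Finset.Nat.antidiagonalTuple k (Q+1-m)).filter
                          (fun i => ∀ j, 1 ≤ i j),
                        nestedAd (fun j => Ω (i j) t) (deriv (Ω m) t)‖
                      = ‖((-1 : ℂ) ^ (k + 1) / ((k + 1).factorial : ℂ))‖ *
                        ‖∑ i ∈ (Finset.Nat.antidiagonalTuple k (Q+1-m)).filter
                          (fun i => ∀ j, 1 ≤ i j),
                        nestedAd (fun j => Ω (i j) t) (deriv (Ω m) t)‖ := norm_smul _ _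
                  _ ≤ 1 * (((Q+1)^k : ℕ) * ((4*Lq)^k * τ^Q * (2*Lq))) :=
                      mul_le_mul (norm_coeff_le_one _ _) hSk (norm_nonneg _) zero_le_one
                  _ = X^k * (τ^Q * (2*Lq)) := by
                      have hXk2 : (((Q+1)^k : ℕ) : ℝ) * ((4*Lq)^k) = X^k := by
                        rw [hXdef, Nat.cast_pow, Nat.cast_add, Nat.cast_one, ← mul_pow]
                      rw [← hXk2]; ring
                  _ ≤ X^Q * (τ^Q * (2*Lq)) := by
                      have hXkQ : X^k ≤ X^Q := pow_le_pow_right₀ hX1 hkQ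
                      exact mul_le_mul_of_nonneg_right hXkQ (by positivity)
                  _ = X^Q * τ^Q * (2*Lq) := by ring
              _ ≤ (Q:ℝ) * (X^Q * τ^Q * (2*Lq)) := by
                  rw [nsmul_eq_mul]
                  apply mul_le_mul_of_nonneg_right ?_ (by positivity)
                  rw [Nat.card_Icc]
                  exact_mod_cast (by omega : Q + 1 - m + 1 - 1 ≤ Q)
          _ ≤ (Q:ℝ) * ((Q:ℝ) * (X^Q * τ^Q * (2*Lq))) := by
              rw [nsmul_eq_mul]
              apply mul_le_mul_of_nonneg_right ?_ hBnn2
              rw [Nat.card_Icc]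
              exact_mod_cast (by omega : Q + 1 - 1 ≤ Q)
        -- combine
        have hXeq : X = 4*((q':ℝ)+2)*Lq := by
          rw [hXdef, hQdef]
          push_cast
          ring
        have hMQ : Mrec Γ₀ Q = Lq + ((q':ℝ)+1)^2 * X^Q * (Γ₀ + 2*Lq) := by
          calc Mrec Γ₀ Q = Mrec Γ₀ (q'+1) := by rw [hQdef]
          _ = Mrec Γ₀ q' + ((q':ℝ)+1)^2 *
              (4*((q':ℝ)+2)*Mrec Γ₀ q')^(q'+1) * (Γ₀ + 2*Mrec Γ₀ q') := rfl
          _ = Lq + ((q':ℝ)+1)^2 * X^Q * (Γ₀ + 2*Lq) := by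
              rw [← hLqdef, ← hXeq, hQdef]
        calc ‖(∑ k ∈ Finset.Icc 1 Q, ((-1 : ℂ) ^ k / (k.factorial : ℂ)) •
              ∑ i ∈ (Finset.Nat.antidiagonalTuple k Q).filter (fun i => ∀ j, 1 ≤ i j),
                nestedAd (fun j => Ω (i j) t) (H t)) +
            Complex.I • ∑ m ∈ Finset.Icc 1 Q, ∑ k ∈ Finset.Icc 1 (Q + 1 - m),
              ((-1 : ℂ) ^ (k + 1) / ((k + 1).factorial : ℂ)) •
                ∑ i ∈ (Finset.Nat.antidiagonalTuple k (Q + 1 - m)).filter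
                    (fun i => ∀ j, 1 ≤ i j),
                  nestedAd (fun j => Ω (i j) t) (deriv (Ω m) t)‖
            ≤ (Q:ℝ) * (X^Q * τ^Q * Γ₀) + (Q:ℝ) * ((Q:ℝ) * (X^Q * τ^Q * (2*Lq))) := by
              refine le_trans (norm_add_le _ _) ?_
              apply add_le_add hA
              rwa [norm_smul, Complex.norm_I, one_mul]
        _ ≤ Mrec Γ₀ Q * τ ^ Q := by
            rw [hMQ]
            have hQq' : (Q:ℝ) = (q':ℝ)+1 := by rw [hQdef]; push_cast; ring
            rw [hQq']
            have h1 : (0:ℝ) ≤ X^Q := by positivity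
            have h2 : (0:ℝ) ≤ τ^Q := by positivity
            have h3 : (0:ℝ) ≤ Lq * τ^Q := by positivity
            have hq'0 : (0:ℝ) ≤ (q':ℝ) := Nat.cast_nonneg _
            nlinarith [mul_nonneg (mul_nonneg h1 h2) hΓ₀.le,
              mul_nonneg (mul_nonneg h1 h2) hLq0.le,
              mul_nonneg hq'0 (mul_nonneg (mul_nonneg h1 h2) hΓ₀.le)]
  -- Ω facts for all 1 ≤ i ≤ p+1 derived from key
  have hΩF : ∀ i, 1 ≤ i → i ≤ p → Continuous (Ω i) ∧ Continuous (deriv (Ω i)) ∧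
      ∀ t ∈ Set.Icc (0:ℝ) τ, ‖Ω i t‖ ≤ 2 * Mrec Γ₀ (i-1) * τ^i ∧
        ‖deriv (Ω i) t‖ ≤ 2 * Mrec Γ₀ (i-1) * τ^(i-1) := by
    intro i hi1 hip
    obtain ⟨i', rfl⟩ : ∃ i', i = i'+1 := ⟨i-1, by omega⟩
    obtain ⟨hc, hb⟩ := key i' (by omega)
    obtain ⟨hΩc, _, hdc, hbd⟩ := omg i' hc hb
    refine ⟨hΩc, hdc, fun t ht => ?_⟩
    simpa using hbd t ht
  constructor
  · -- first conclusion
    intro q hq t ht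
    obtain ⟨hc, hb⟩ := key q hq
    obtain ⟨_, _, _, hbd⟩ := omg q hc hb
    exact ⟨hb t ht, (hbd t ht).1, (hbd t ht).2⟩
  · -- remainder
    intro t ht
    -- per-tuple bound with L = Mrec Γ₀ p
    have tupR : ∀ (k : ℕ) (i : Fin k → ℕ) (Y : 𝒜) (CY : ℝ), (∀ j, 1 ≤ i j) →
        (∀ j, i j ≤ p) → ‖Y‖ ≤ CY →
        ‖nestedAd (fun j => Ω (i j) t) Y‖ ≤ (4*L)^k * τ ^ (∑ j, i j) * CY := by
      intro k i Y CY h1 h2 hY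
      apply prod_ad_bound _ _ L τ CY hL0.le hτ0.le i ?_ hY
      intro j
      have hb := ((hΩF (i j) (h1 j) (h2 j)).2.2 t ht).1
      have hmm : Mrec Γ₀ (i j - 1) ≤ L := by
        rw [hLdef]
        have h2j := h2 j
        exact hMmono (by omega)
      have hτp : (0:ℝ) ≤ τ ^ (i j) := by positivity
      calc ‖Ω (i j) t‖ ≤ 2 * Mrec Γ₀ (i j - 1) * τ ^ (i j) := hb
      _ ≤ 2 * L * τ ^ (i j) := by nlinarith
    -- bound on each remainder term
    have hRk : ∀ k : ℕ, ‖R k t‖ ≤ (D * τ^(p+1)) * (x^k / (k.factorial : ℝ)) := by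
      intro k
      rw [hR k t]
      have hfk : (0:ℝ) < (k.factorial : ℝ) := by exact_mod_cast k.factorial_pos
      -- first piece
      have hP1 : ‖((-1 : ℂ) ^ k / (k.factorial : ℂ)) •
          ∑ i ∈ (Fintype.piFinset fun _ : Fin k => Finset.Icc 1 p).filter
              (fun i => p + 1 ≤ ∑ j, i j),
            nestedAd (fun j => Ω (i j) t) (H t)‖
          ≤ (1 / (k.factorial : ℝ)) * ((p^k : ℕ) * ((4*L)^k * τ^(p+1) * Γ₀)) := by
        rw [norm_smul, norm_coeff_eq]
        apply mul_le_mul_of_nonneg_left ?_ (by positivity)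
        apply norm_sum_le_card_mul _ _ _ ?_ _ (card_filter_piFinset_le k p _) (by positivity)
        intro i hi
        have hi' := Finset.mem_filter.1 hi
        have hmem : ∀ j, i j ∈ Finset.Icc 1 p := fun j => Fintype.mem_piFinset.1 hi'.1 j
        have h1 : ∀ j, 1 ≤ i j := fun j => (Finset.mem_Icc.1 (hmem j)).1
        have h2 : ∀ j, i j ≤ p := fun j => (Finset.mem_Icc.1 (hmem j)).2
        have := tupR k i (H t) Γ₀ h1 h2 (HB t)
        calc ‖nestedAd (fun j => Ω (i j) t) (H t)‖
            ≤ (4*L)^k * τ ^ (∑ j, i j) * Γ₀ := this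
        _ ≤ (4*L)^k * τ^(p+1) * Γ₀ := by
            have hts : τ ^ (∑ j, i j) ≤ τ^(p+1) :=
              pow_le_pow_of_le_one hτ0.le hτ1.le hi'.2
            have h4L : (0:ℝ) ≤ (4*L)^k := by positivity
            exact mul_le_mul_of_nonneg_right (mul_le_mul_of_nonneg_left hts h4L) hΓ₀.le
      -- second piece
      have hP2 : ‖∑ m ∈ Finset.Icc 1 p,
          ((-1 : ℂ) ^ k / ((k + 1).factorial : ℂ)) •
            ∑ i ∈ (Fintype.piFinset fun _ : Fin k => Finset.Icc 1 p).filter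
                (fun i => p + 2 - m ≤ ∑ j, i j),
              nestedAd (fun j => Ω (i j) t) (deriv (Ω m) t)‖
          ≤ (p:ℝ) * ((1 / (k.factorial : ℝ)) * ((p^k : ℕ) * ((4*L)^k * τ^(p+1) * (2*L)))) := by
        have hBnn : (0:ℝ) ≤ (1 / (k.factorial : ℝ)) * ((p^k : ℕ) * ((4*L)^k * τ^(p+1) * (2*L))) := by
          positivity
        calc ‖∑ m ∈ Finset.Icc 1 p,
            ((-1 : ℂ) ^ k / ((k + 1).factorial : ℂ)) •
              ∑ i ∈ (Fintype.piFinset fun _ : Fin k => Finset.Icc 1 p).filter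
                  (fun i => p + 2 - m ≤ ∑ j, i j),
                nestedAd (fun j => Ω (i j) t) (deriv (Ω m) t)‖
            ≤ ∑ m ∈ Finset.Icc 1 p, ‖((-1 : ℂ) ^ k / ((k + 1).factorial : ℂ)) •
              ∑ i ∈ (Fintype.piFinset fun _ : Fin k => Finset.Icc 1 p).filter
                  (fun i => p + 2 - m ≤ ∑ j, i j),
                nestedAd (fun j => Ω (i j) t) (deriv (Ω m) t)‖ := norm_sum_le _ _
        _ ≤ (p:ℝ) * ((1 / (k.factorial : ℝ)) * ((p^k : ℕ) * ((4*L)^k * τ^(p+1) * (2*L)))) := by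
            apply sum_le_card_mul _ _ _ ?_ p (by rw [Nat.card_Icc]; omega) hBnn
            intro m hm
            obtain ⟨hm1, hmp⟩ := Finset.mem_Icc.1 hm
            have hdb : ‖deriv (Ω m) t‖ ≤ 2 * L * τ ^ (m-1) := by
              have hb := ((hΩF m hm1 hmp).2.2 t ht).2
              have hmm : Mrec Γ₀ (m - 1) ≤ L := by
                rw [hLdef]; exact hMmono (by omega)
              have hτp : (0:ℝ) ≤ τ ^ (m-1) := by positivity
              calc ‖deriv (Ω m) t‖ ≤ 2 * Mrec Γ₀ (m-1) * τ ^ (m-1) := hb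
              _ ≤ 2 * L * τ ^ (m-1) := by nlinarith
            rw [norm_smul, norm_coeff_eq]
            have hcle : (1:ℝ) / ((k+1).factorial : ℝ) ≤ 1 / (k.factorial : ℝ) := by
              apply one_div_le_one_div_of_le hfk
              exact_mod_cast Nat.factorial_le (Nat.le_succ k)
            have hSm : ‖∑ i ∈ (Fintype.piFinset fun _ : Fin k => Finset.Icc 1 p).filter
                  (fun i => p + 2 - m ≤ ∑ j, i j),
                nestedAd (fun j => Ω (i j) t) (deriv (Ω m) t)‖
                ≤ (p^k : ℕ) * ((4*L)^k * τ^(p+1) * (2*L)) := by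
              apply norm_sum_le_card_mul _ _ _ ?_ _ (card_filter_piFinset_le k p _) (by positivity)
              intro i hi
              have hi' := Finset.mem_filter.1 hi
              have hmem : ∀ j, i j ∈ Finset.Icc 1 p := fun j => Fintype.mem_piFinset.1 hi'.1 j
              have h1 : ∀ j, 1 ≤ i j := fun j => (Finset.mem_Icc.1 (hmem j)).1
              have h2 : ∀ j, i j ≤ p := fun j => (Finset.mem_Icc.1 (hmem j)).2
              have := tupR k i (deriv (Ω m) t) (2 * L * τ ^ (m-1)) h1 h2 hdb
              calc ‖nestedAd (fun j => Ω (i j) t) (deriv (Ω m) t)‖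
                  ≤ (4*L)^k * τ ^ (∑ j, i j) * (2 * L * τ ^ (m-1)) := this
              _ ≤ (4*L)^k * τ^(p+2-m) * (2 * L * τ ^ (m-1)) := by
                  have hts : τ ^ (∑ j, i j) ≤ τ^(p+2-m) :=
                    pow_le_pow_of_le_one hτ0.le hτ1.le hi'.2
                  have h4L : (0:ℝ) ≤ (4*L)^k := by positivity
                  exact mul_le_mul_of_nonneg_right
                    (mul_le_mul_of_nonneg_left hts h4L) (by positivity)
              _ = (4*L)^k * τ^(p+1) * (2*L) := by
                  rw [show (4*L)^k * τ^(p+2-m) * (2 * L * τ ^ (m-1))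
                      = (4*L)^k * (τ^(p+2-m) * τ^(m-1)) * (2*L) by ring, ← pow_add,
                    (by omega : p+2-m+(m-1) = p+1)]
            exact mul_le_mul hcle hSm (norm_nonneg _) (by positivity)

      have heq : (1 / (k.factorial : ℝ)) * ((p^k : ℕ) * ((4*L)^k * τ^(p+1) * Γ₀)) +
          (p:ℝ) * ((1 / (k.factorial : ℝ)) * ((p^k : ℕ) * ((4*L)^k * τ^(p+1) * (2*L))))
          = (D * τ^(p+1)) * (x^k / (k.factorial : ℝ)) := by
        rw [hDdef, hxdef]
        push_cast
        field_simp
        ring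
      rw [← heq]
      refine le_trans (norm_sub_le _ _) ?_
      apply add_le_add hP1
      rw [norm_smul, Complex.norm_I, one_mul]
      exact hP2
    refine ⟨?_, ?_⟩
    · apply Summable.of_nonneg_of_le (fun k => norm_nonneg _) hRk
      exact (Real.summable_pow_div_factorial x).mul_left _
    · have hsum1 : Summable (fun k : ℕ => ‖R k t‖) := by
        apply Summable.of_nonneg_of_le (fun k => norm_nonneg _) hRk
        exact (Real.summable_pow_div_factorial x).mul_left _
      have hsum2 : Summable (fun k : ℕ => (D * τ^(p+1)) * (x^k / (k.factorial : ℝ))) :=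
        (Real.summable_pow_div_factorial x).mul_left _
      calc ‖∑' k : ℕ, R k t‖ ≤ ∑' k : ℕ, ‖R k t‖ := norm_tsum_le_tsum_norm hsum1
      _ ≤ ∑' k : ℕ, (D * τ^(p+1)) * (x^k / (k.factorial : ℝ)) :=
          Summable.tsum_le_tsum hRk hsum1 hsum2
      _ = (D * τ^(p+1)) * S := by rw [tsum_mul_left, ← hSdef]
      _ ≤ (D * S + 1) * τ^(p+1) := by
          have hτp : (0:ℝ) ≤ τ^(p+1) := by positivity
          nlinarith
end

section
/- Let P, M ∈ M_n(ℂ) with P Hermitian and exp(2πiP) = I, let 𝜏 ∈ (0,1), and fix an integer p ≥ 1. For A ∈ M_n(ℂ) set 𝔼(A) = ∫₀¹ exp(2πisP)·A·exp(−2πisP) ds. Define recursively G⁽⁰⁾ = M; Ω⁽ᑫ⁾ = 2πi·𝜏·∫₀¹∫₀^{s₁} exp(2πis₂P)·(G⁽ᑫ⁻¹⁾ − 𝔼(G⁽ᑫ⁻¹⁾))·exp(−2πis₂P) ds₂ ds₁ (so that [Ω⁽ᑫ⁾, P] = 𝜏·(G⁽ᑫ⁻¹⁾ − 𝔼(G⁽ᑫ⁻¹⁾)));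 and G⁽ᑫ⁾ = Σ_{k=1}^{q} ((−1)^k/k!) Σ_{i₁,…,i_k ≥ 1, i₁+⋯+i_k = q} ad_{Ω^{(i₁)}}∘⋯∘ad_{Ω^{(i_k)}}(M) + (1/𝜏)·Σ_{k=2}^{q} ((−1)^k/k!) Σ_{i₁,…,i_k ≥ 1, i₁+⋯+i_k = q+1} ad_{Ω^{(i₁)}}∘⋯∘ad_{Ω^{(i_k)}}(P), where ad_X(Y) = XY − YX. Then there exists a constant W_p > 0 depending only on p, ‖M‖ and ‖P‖ (and not on n or 𝜏) such that ‖Ω⁽ᑫ⁾‖ ≤ W_p·𝜏^q for every 1 ≤ q ≤ p, and consequently ‖Ω⁽¹⁾ + Ω⁽²⁾ + ⋯ + Ω⁽ᵖ⁾‖ ≤ p·W_p·𝜏. -/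
/-!
Conjugation by `exp(2πisP)` with `|s| ≤ 1` multiplies norms by at most `exp(4π‖P‖)`, so the
double average defining `Ω⁽ᑫ⁺¹⁾` gives `‖Ω⁽ᑫ⁺¹⁾‖ ≤ α τ ‖G⁽ᑫ⁾‖` with `α` depending only on `‖P‖`.
Conversely `G⁽ᑫ⁾` is a combination, with coefficients of modulus at most one, of boundedly many
nested commutators of generators whose indices add up to `q`, or to `q + 1` with at least two
indices (each then at most `q`), the extra power of `τ` paying for the factor `1/τ`. Strong
induction on `q` thus gives `‖G⁽ᑫ⁾‖ ≤ C_q τ^q` with `C_q` built recursively from bounds on `‖M‖`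
and `‖P‖` alone, whence `‖Ω⁽ᑫ⁾‖ ≤ α C_p τ^q`.
-/

open Matrix MeasureTheory intervalIntegral
open scoped Matrix.Norms.L2Operator

open Finset

lemma norm_exp_le_exp_norm_of_norm_one_le {𝕂 𝔸 : Type*} [RCLike 𝕂] [NormedRing 𝔸]
    [NormedAlgebra 𝕂 𝔸] [CompleteSpace 𝔸] (hone : ‖(1 : 𝔸)‖ ≤ 1) (x : 𝔸) :
    ‖NormedSpace.exp x‖ ≤ Real.exp ‖x‖ := by
  rw [Real.exp_eq_exp_ℝ, NormedSpace.exp_eq_tsum 𝕂, NormedSpace.exp_eq_tsum ℝ]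
  have hsum : Summable fun n : ℕ => ‖((n.factorial : 𝕂))⁻¹ • x ^ n‖ :=
    NormedSpace.norm_expSeries_summable' x
  refine (norm_tsum_le_tsum_norm hsum).trans <|
    hsum.tsum_le_tsum (fun n => ?_) (NormedSpace.expSeries_summable' (𝕂 := ℝ) ‖x‖)
  have hpow : ‖x ^ n‖ ≤ ‖x‖ ^ n := by
    cases n with
    | zero => simpa using hone
    | succ n => exact norm_pow_le' x n.succ_pos
  rw [norm_smul, norm_inv, smul_eq_mul, RCLike.norm_natCast]
  gcongr

lemma Matrix.l2_opNorm_one_le {𝕜 ι : Type*} [RCLike 𝕜] [Fintype ι] [DecidableEq ι] :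
    ‖(1 : Matrix ι ι 𝕜)‖ ≤ 1 := by
  rw [Matrix.cstar_norm_def, _root_.map_one, ContinuousLinearMap.one_def]
  exact ContinuousLinearMap.norm_id_le

section Conjugation

variable {ι : Type*} [Fintype ι] [DecidableEq ι]

lemma norm_exp_smul_le (P : Matrix ι ι ℂ) {c : ℂ} {r : ℝ} (hc : ‖c‖ ≤ r) :
    ‖NormedSpace.exp (c • P)‖ ≤ Real.exp (r * ‖P‖) :=
  (norm_exp_le_exp_norm_of_norm_one_le (𝕂 := ℂ) Matrix.l2_opNorm_one_le _).trans <|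
    Real.exp_le_exp.2 <| (norm_smul c P).trans_le <| by gcongr

lemma norm_exp_mul_mul_exp_neg_le (P A : Matrix ι ι ℂ) {s : ℝ} (hs : |s| ≤ 1) :
    ‖NormedSpace.exp ((((2 * Real.pi * s : ℝ) : ℂ) * Complex.I) • P) * A *
        NormedSpace.exp ((-((2 * Real.pi * s : ℝ) : ℂ) * Complex.I) • P)‖ ≤
      Real.exp (2 * Real.pi * ‖P‖) ^ 2 * ‖A‖ := by
  have hc : ‖(((2 * Real.pi * s : ℝ) : ℂ) * Complex.I)‖ ≤ 2 * Real.pi := by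
    rw [norm_mul, Complex.norm_I, mul_one, Complex.norm_real, Real.norm_eq_abs, abs_mul,
      abs_of_pos Real.two_pi_pos]
    exact mul_le_of_le_one_right Real.two_pi_pos.le hs
  have hc' : ‖(-((2 * Real.pi * s : ℝ) : ℂ) * Complex.I)‖ ≤ 2 * Real.pi := by
    rwa [neg_mul, norm_neg]
  calc _ ≤ ‖NormedSpace.exp ((((2 * Real.pi * s : ℝ) : ℂ) * Complex.I) • P)‖ * ‖A‖ *
        ‖NormedSpace.exp ((-((2 * Real.pi * s : ℝ) : ℂ) * Complex.I) • P)‖ :=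
        norm_mul₃_le
    _ ≤ Real.exp (2 * Real.pi * ‖P‖) * ‖A‖ * Real.exp (2 * Real.pi * ‖P‖) := by
        gcongr <;> exact norm_exp_smul_le P ‹_›
    _ = Real.exp (2 * Real.pi * ‖P‖) ^ 2 * ‖A‖ := by ring

end Conjugation

section UnitInterval

variable {E : Type*} [NormedAddCommGroup E] [NormedSpace ℝ E] {f : ℝ → E} {c : ℝ}

lemma norm_integral_zero_one_le (h : ∀ s ∈ Set.Ioc (0 : ℝ) 1, ‖f s‖ ≤ c) :
    ‖∫ s in (0 : ℝ)..1, f s‖ ≤ c := by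
  have h' : ∀ s ∈ Set.uIoc (0 : ℝ) 1, ‖f s‖ ≤ c := by rwa [Set.uIoc_of_le zero_le_one]
  simpa using intervalIntegral.norm_integral_le_of_norm_le_const h'

lemma norm_integral_integral_zero_le (h : ∀ s ∈ Set.Ioc (0 : ℝ) 1, ‖f s‖ ≤ c) :
    ‖∫ s₁ in (0 : ℝ)..1, ∫ s₂ in (0 : ℝ)..s₁, f s₂‖ ≤ c := by
  have hc : 0 ≤ c := (norm_nonneg _).trans (h 1 ⟨one_pos, le_rfl⟩)
  refine norm_integral_zero_one_le fun s₁ ⟨hs₁, hs₁'⟩ => ?_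
  calc ‖∫ s₂ in (0 : ℝ)..s₁, f s₂‖ ≤ c * |s₁ - 0| := by
        refine intervalIntegral.norm_integral_le_of_norm_le_const fun s hs => h s ?_
        rw [Set.uIoc_of_le hs₁.le] at hs
        exact ⟨hs.1, hs.2.trans hs₁'⟩
    _ ≤ c := by rw [sub_zero, abs_of_pos hs₁]; exact mul_le_of_le_one_right hc hs₁'

end UnitInterval

noncomputable def generatorGain (ρ : ℝ) : ℝ :=
  2 * Real.pi * (Real.exp (2 * Real.pi * ρ) ^ 2 * (1 + Real.exp (2 * Real.pi * ρ) ^ 2))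

lemma one_le_generatorGain {ρ : ℝ} (hρ : 0 ≤ ρ) : 1 ≤ generatorGain ρ := by
  have hK : 1 ≤ Real.exp (2 * Real.pi * ρ) ^ 2 := one_le_pow₀ (Real.one_le_exp (by positivity))
  calc (1 : ℝ) ≤ 2 * Real.pi * (1 * (1 + 1)) := by nlinarith [Real.pi_gt_three]
    _ ≤ generatorGain ρ := by unfold generatorGain; gcongr

lemma norm_generator_le {ι : Type*} [Fintype ι] [DecidableEq ι] (P A : Matrix ι ι ℂ)
    (E : Matrix ι ι ℂ → Matrix ι ι ℂ)
    (hE : ∀ A, E A = ∫ s in (0:ℝ)..1,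
      NormedSpace.exp ((((2 * Real.pi * s : ℝ) : ℂ) * Complex.I) • P) * A *
        NormedSpace.exp ((-((2 * Real.pi * s : ℝ) : ℂ) * Complex.I) • P))
    {τ ρ : ℝ} (hτ : 0 ≤ τ) (hP : ‖P‖ ≤ ρ) :
    ‖((((2 * Real.pi : ℝ) : ℂ) * Complex.I) * (τ : ℂ)) •
      ∫ s₁ in (0:ℝ)..1, ∫ s₂ in (0:ℝ)..s₁,
        NormedSpace.exp ((((2 * Real.pi * s₂ : ℝ) : ℂ) * Complex.I) • P) * (A - E A) *
          NormedSpace.exp ((-((2 * Real.pi * s₂ : ℝ) : ℂ) * Complex.I) • P)‖ ≤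
      generatorGain ρ * τ * ‖A‖ := by
  set K := Real.exp (2 * Real.pi * ‖P‖)
  have hconj : ∀ B, ∀ s ∈ Set.Ioc (0 : ℝ) 1,
      ‖NormedSpace.exp ((((2 * Real.pi * s : ℝ) : ℂ) * Complex.I) • P) * B *
        NormedSpace.exp ((-((2 * Real.pi * s : ℝ) : ℂ) * Complex.I) • P)‖ ≤ K ^ 2 * ‖B‖ :=
    fun B s hs => norm_exp_mul_mul_exp_neg_le P B (abs_le.2 ⟨by linarith [hs.1], hs.2⟩)
  have hEA : ‖E A‖ ≤ K ^ 2 * ‖A‖ := hE A ▸ norm_integral_zero_one_le (hconj A)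
  have hdiff : ‖A - E A‖ ≤ (1 + K ^ 2) * ‖A‖ := by linarith [norm_sub_le A (E A)]
  have hK : K ≤ Real.exp (2 * Real.pi * ρ) :=
    Real.exp_le_exp.2 (mul_le_mul_of_nonneg_left hP Real.two_pi_pos.le)
  have hscalar : ‖(((2 * Real.pi : ℝ) : ℂ) * Complex.I) * (τ : ℂ)‖ = 2 * Real.pi * τ := by
    rw [norm_mul, norm_mul, Complex.norm_I, mul_one, Complex.norm_real, Complex.norm_real,
      Real.norm_of_nonneg Real.two_pi_pos.le, Real.norm_of_nonneg hτ]
  rw [norm_smul, hscalar]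
  calc 2 * Real.pi * τ * ‖∫ s₁ in (0:ℝ)..1, ∫ s₂ in (0:ℝ)..s₁,
        NormedSpace.exp ((((2 * Real.pi * s₂ : ℝ) : ℂ) * Complex.I) • P) * (A - E A) *
          NormedSpace.exp ((-((2 * Real.pi * s₂ : ℝ) : ℂ) * Complex.I) • P)‖
      ≤ 2 * Real.pi * τ * (K ^ 2 * ((1 + K ^ 2) * ‖A‖)) := by
        gcongr
        refine norm_integral_integral_zero_le fun s hs => (hconj _ s hs).trans ?_
        gcongr
    _ = 2 * Real.pi * (K ^ 2 * (1 + K ^ 2)) * τ * ‖A‖ := by ring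
    _ ≤ generatorGain ρ * τ * ‖A‖ := by
        unfold generatorGain
        gcongr

namespace Finset.Nat

lemma card_antidiagonalTuple_le (k m : ℕ) : #(antidiagonalTuple k m) ≤ (m + 1) ^ k := by
  calc #(antidiagonalTuple k m)
      ≤ #(Fintype.piFinset fun _ : Fin k => range (m + 1)) := by
        refine card_le_card fun x hx => Fintype.mem_piFinset.2 fun j => ?_
        rw [mem_antidiagonalTuple] at hx
        exact mem_range.2 (Nat.lt_succ_of_le (hx ▸ single_le_sum (fun _ _ => Nat.zero_le _)
          (mem_univ j)))
    _ = (m + 1) ^ k := by simp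

lemma le_of_mem_antidiagonalTuple {k m : ℕ} {i : Fin k → ℕ} (hi : i ∈ antidiagonalTuple k m)
    (j : Fin k) : i j ≤ m :=
  mem_antidiagonalTuple.1 hi ▸ single_le_sum (fun _ _ => Nat.zero_le _) (mem_univ j)

lemma add_le_of_mem_antidiagonalTuple {k m : ℕ} {i : Fin k → ℕ}
    (hi : i ∈ antidiagonalTuple k m) {j j' : Fin k} (h : j ≠ j') : i j + i j' ≤ m := by
  rw [← sum_pair h, ← mem_antidiagonalTuple.1 hi]
  exact sum_le_sum_of_subset (subset_univ _)

end Finset.Nat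

lemma norm_foldr_commutator_le {𝔸 : Type*} [NonUnitalNormedRing 𝔸] (l : List 𝔸) (Y : 𝔸) :
    ‖l.foldr (fun A Z => A * Z - Z * A) Y‖ ≤ 2 ^ l.length * (l.map norm).prod * ‖Y‖ := by
  induction l with
  | nil => simp
  | cons A t ih =>
    set Z := t.foldr (fun A Z => A * Z - Z * A) Y
    have hprod : 0 ≤ (t.map norm).prod := List.prod_nonneg (by simp)
    calc ‖A * Z - Z * A‖ ≤ ‖A‖ * ‖Z‖ + ‖Z‖ * ‖A‖ :=
          (norm_sub_le _ _).trans (add_le_add (norm_mul_le _ _) (norm_mul_le _ _))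
      _ = 2 * ‖A‖ * ‖Z‖ := by ring
      _ ≤ 2 * ‖A‖ * (2 ^ t.length * (t.map norm).prod * ‖Y‖) := by gcongr
      _ = _ := by simp only [List.length_cons, List.map_cons, List.prod_cons]; ring

section Commutators

variable {𝔸 : Type*} [NormedRing 𝔸]

lemma norm_nestedAd_le {k : ℕ} (X : Fin k → 𝔸) (Y : 𝔸) :
    ‖nestedAd X Y‖ ≤ 2 ^ k * (∏ j, ‖X j‖) * ‖Y‖ := by
  simpa [nestedAd, List.map_ofFn, List.prod_ofFn, Function.comp] using
    norm_foldr_commutator_le (List.ofFn X) Y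

lemma norm_nestedAd_le_of_mem_antidiagonalTuple {Ω : ℕ → 𝔸} {k m : ℕ} {i : Fin k → ℕ}
    (hi : i ∈ Finset.Nat.antidiagonalTuple k m) {a τ : ℝ}
    (hΩ : ∀ j, ‖Ω (i j)‖ ≤ a * τ ^ i j) (Y : 𝔸) :
    ‖nestedAd (fun j => Ω (i j)) Y‖ ≤ (2 * a) ^ k * τ ^ m * ‖Y‖ := by
  have hprod : ∏ j, ‖Ω (i j)‖ ≤ a ^ k * τ ^ m := by
    calc ∏ j, ‖Ω (i j)‖ ≤ ∏ j, a * τ ^ i j :=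
          prod_le_prod (fun j _ => norm_nonneg _) fun j _ => hΩ j
      _ = a ^ k * τ ^ m := by
          rw [prod_mul_distrib, prod_pow_eq_pow_sum, Finset.Nat.mem_antidiagonalTuple.1 hi,
            prod_const, card_univ, Fintype.card_fin]
  calc ‖nestedAd (fun j => Ω (i j)) Y‖ ≤ 2 ^ k * (∏ j, ‖Ω (i j)‖) * ‖Y‖ := norm_nestedAd_le _ _
    _ ≤ 2 ^ k * (a ^ k * τ ^ m) * ‖Y‖ := by gcongr
    _ = (2 * a) ^ k * τ ^ m * ‖Y‖ := by ring

variable [NormedAlgebra ℂ 𝔸]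

noncomputable def commutatorSeries (Ω : ℕ → 𝔸) (ks : Finset ℕ) (m : ℕ) (Y : 𝔸) : 𝔸 :=
  ∑ k ∈ ks, ((-1 : ℂ) ^ k / (k.factorial : ℂ)) •
    ∑ i ∈ (Finset.Nat.antidiagonalTuple k m).filter (fun i => ∀ j, 1 ≤ i j),
      nestedAd (fun j => Ω (i j)) Y

lemma norm_commutatorSeries_le {Ω : ℕ → 𝔸} {ks : Finset ℕ} {m : ℕ} {a τ : ℝ}
    (ha : 1 ≤ 2 * a) (hτ : 0 ≤ τ) (hks : ∀ k ∈ ks, k ≤ m)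
    (hΩ : ∀ k ∈ ks, ∀ i ∈ (Finset.Nat.antidiagonalTuple k m).filter (fun i => ∀ j, 1 ≤ i j),
      ∀ j, ‖Ω (i j)‖ ≤ a * τ ^ i j) (Y : 𝔸) :
    ‖commutatorSeries Ω ks m Y‖ ≤ #ks * ((m + 1) ^ m * ((2 * a) ^ m * τ ^ m * ‖Y‖)) := by
  refine (norm_sum_le _ _).trans ((sum_le_card_nsmul _ _ _ fun k hk => ?_).trans_eq
    (nsmul_eq_mul _ _))
  set tuples := (Finset.Nat.antidiagonalTuple k m).filter (fun i => ∀ j, 1 ≤ i j)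
  have hcoeff : ‖(-1 : ℂ) ^ k / (k.factorial : ℂ)‖ ≤ 1 := by
    rw [norm_div, norm_pow, norm_neg, norm_one, one_pow, Complex.norm_natCast]
    exact div_le_one_of_le₀ (by exact_mod_cast k.factorial_pos) (Nat.cast_nonneg _)
  have hcard : (#tuples : ℝ) ≤ (m + 1) ^ m := by
    calc (#tuples : ℝ) ≤ ((m + 1) ^ k : ℕ) := by
          exact_mod_cast (card_filter_le _ _).trans (Finset.Nat.card_antidiagonalTuple_le k m)
      _ ≤ (m + 1) ^ m := by push_cast; exact pow_le_pow_right₀ (by linarith) (hks k hk)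
  have hterm : ∀ i ∈ tuples, ‖nestedAd (fun j => Ω (i j)) Y‖ ≤ (2 * a) ^ m * τ ^ m * ‖Y‖ :=
    fun i hi => (norm_nestedAd_le_of_mem_antidiagonalTuple (mem_filter.1 hi).1
      (hΩ k hk i hi) Y).trans (by gcongr; exacts [hks k hk])
  calc ‖((-1 : ℂ) ^ k / (k.factorial : ℂ)) • ∑ i ∈ tuples, nestedAd (fun j => Ω (i j)) Y‖
      ≤ 1 * (#tuples * ((2 * a) ^ m * τ ^ m * ‖Y‖)) := by
        rw [norm_smul, ← nsmul_eq_mul]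
        exact mul_le_mul hcoeff ((norm_sum_le _ _).trans (sum_le_card_nsmul _ _ _ hterm))
          (norm_nonneg _) zero_le_one
    _ ≤ (m + 1) ^ m * ((2 * a) ^ m * τ ^ m * ‖Y‖) := by
        rw [one_mul]; gcongr

end Commutators

lemma norm_commutatorSeries_add_le {𝔸 : Type*} [NormedRing 𝔸] [NormedAlgebra ℂ 𝔸]
    {Ω : ℕ → 𝔸} {M P : 𝔸} {a τ μ : ℝ} (q : ℕ) (ha : 1 ≤ 2 * a) (hτ : 0 < τ)
    (hM : ‖M‖ ≤ μ) (hP : ‖P‖ ≤ μ) (hΩ : ∀ s, 1 ≤ s → s ≤ q + 1 → ‖Ω s‖ ≤ a * τ ^ s) :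
    ‖commutatorSeries Ω (Icc 1 (q + 1)) (q + 1) M‖ +
        τ⁻¹ * ‖commutatorSeries Ω (Icc 2 (q + 1)) (q + 1 + 1) P‖ ≤
      2 * (q + 1) * (q + 3) ^ (q + 2) * (2 * a) ^ (q + 2) * μ * τ ^ (q + 1) := by
  have hM' := norm_commutatorSeries_le (ks := Icc 1 (q + 1)) ha hτ.le
    (fun k hk => (mem_Icc.1 hk).2)
    (fun k _ i hi j => hΩ _ ((mem_filter.1 hi).2 j)
      (Finset.Nat.le_of_mem_antidiagonalTuple (mem_filter.1 hi).1 j)) M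
  have hP' := norm_commutatorSeries_le (ks := Icc 2 (q + 1)) (m := q + 1 + 1) ha hτ.le
    (fun k hk => (mem_Icc.1 hk).2.trans (Nat.le_succ _)) (fun k hk i hi j => by
      -- with at least two parts, each part is at most the total minus one
      have : Nontrivial (Fin k) := Fin.nontrivial_iff_two_le.2 (mem_Icc.1 hk).1
      obtain ⟨j', hj'⟩ := exists_ne j
      have := Finset.Nat.add_le_of_mem_antidiagonalTuple (mem_filter.1 hi).1 hj'.symm
      exact hΩ _ ((mem_filter.1 hi).2 j) (by linarith [(mem_filter.1 hi).2 j'])) P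
  rw [Nat.card_Icc, show q + 1 + 1 - 1 = q + 1 by omega] at hM'
  rw [Nat.card_Icc, show q + 1 + 1 - 2 = q by omega] at hP'
  push_cast at hM' hP'
  have hτq : τ⁻¹ * τ ^ (q + 1 + 1) = τ ^ (q + 1) := by
    rw [pow_succ, mul_comm, mul_assoc, mul_inv_cancel₀ hτ.ne', mul_one]
  have hbase : ((q : ℝ) + 1 + 1) ^ (q + 1) ≤ (q + 3) ^ (q + 2) :=
    (pow_le_pow_left₀ (by positivity) (by linarith) _).trans
      (pow_le_pow_right₀ (by linarith) (by omega))
  have hpow : (2 * a) ^ (q + 1) ≤ (2 * a) ^ (q + 2) := pow_le_pow_right₀ ha (by omega)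
  have ha' : 0 ≤ 2 * a := by linarith
  calc _ ≤ (q + 1) * ((q + 1 + 1) ^ (q + 1) * ((2 * a) ^ (q + 1) * τ ^ (q + 1) * ‖M‖)) +
        τ⁻¹ * (q * ((q + 1 + 1 + 1) ^ (q + 1 + 1) *
          ((2 * a) ^ (q + 1 + 1) * τ ^ (q + 1 + 1) * ‖P‖))) := by gcongr
    _ = (q + 1) * (q + 1 + 1) ^ (q + 1) * (2 * a) ^ (q + 1) * ‖M‖ * τ ^ (q + 1) +
        q * (q + 3) ^ (q + 2) * (2 * a) ^ (q + 2) * ‖P‖ * τ ^ (q + 1) := by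
      rw [← hτq]; ring
    _ ≤ (q + 1) * (q + 3) ^ (q + 2) * (2 * a) ^ (q + 2) * μ * τ ^ (q + 1) +
        (q + 1) * (q + 3) ^ (q + 2) * (2 * a) ^ (q + 2) * μ * τ ^ (q + 1) := by
      gcongr; linarith
    _ = _ := by ring

-- `C_{q+1}` is the bound of `norm_commutatorSeries_add_le` for `a = α C_q`.
noncomputable def generatorConst (α μ : ℝ) : ℕ → ℝ
  | 0 => μ
  | q + 1 => 2 * (q + 1) * (q + 3) ^ (q + 2) * (2 * (α * generatorConst α μ q)) ^ (q + 2) * μ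

section GeneratorConst

variable {α μ : ℝ}

lemma le_generatorConst_succ (hα : 1 ≤ α) (hμ : 1 ≤ μ) {q : ℕ} (hq : 1 ≤ generatorConst α μ q) :
    generatorConst α μ q ≤ generatorConst α μ (q + 1) := by
  set C := generatorConst α μ q
  have hfactor : (1 : ℝ) ≤ 2 * (q + 1) * (q + 3) ^ (q + 2) := by
    have : (1 : ℝ) ≤ (q + 3) ^ (q + 2) := one_le_pow₀ (by linarith)
    nlinarith
  calc C ≤ (2 * (α * C)) ^ 1 := by nlinarith
    _ ≤ (2 * (α * C)) ^ (q + 2) := pow_le_pow_right₀ (by nlinarith) (by omega)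
    _ ≤ 2 * (q + 1) * (q + 3) ^ (q + 2) * (2 * (α * C)) ^ (q + 2) :=
        le_mul_of_one_le_left (by positivity) hfactor
    _ ≤ generatorConst α μ (q + 1) := le_mul_of_one_le_right (by positivity) hμ

lemma one_le_generatorConst (hα : 1 ≤ α) (hμ : 1 ≤ μ) : ∀ q, 1 ≤ generatorConst α μ q
  | 0 => hμ
  | q + 1 => (one_le_generatorConst hα hμ q).trans
      (le_generatorConst_succ hα hμ (one_le_generatorConst hα hμ q))

lemma generatorConst_mono (hα : 1 ≤ α) (hμ : 1 ≤ μ) : Monotone (generatorConst α μ) :=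
  monotone_nat_of_le_succ fun q => le_generatorConst_succ hα hμ (one_le_generatorConst hα hμ q)

variable {𝔸 : Type*} [NormedRing 𝔸] {Ω G : ℕ → 𝔸} {τ : ℝ}

lemma norm_le_generatorConst_mul_pow_of_le (hα : 1 ≤ α) (hμ : 1 ≤ μ) (hτ : 0 ≤ τ)
    (hΩ : ∀ t, ‖Ω (t + 1)‖ ≤ α * τ * ‖G t‖) {q : ℕ}
    (hG : ∀ t ≤ q, ‖G t‖ ≤ generatorConst α μ t * τ ^ t) {s : ℕ} (hs₁ : 1 ≤ s) (hs₂ : s ≤ q + 1) :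
    ‖Ω s‖ ≤ α * generatorConst α μ q * τ ^ s := by
  obtain ⟨t, rfl⟩ : ∃ t, s = t + 1 := ⟨s - 1, by omega⟩
  calc ‖Ω (t + 1)‖ ≤ α * τ * (generatorConst α μ t * τ ^ t) :=
        (hΩ t).trans (by gcongr; exact hG t (by omega))
    _ ≤ α * τ * (generatorConst α μ q * τ ^ t) := by
        gcongr; exact generatorConst_mono hα hμ (by omega)
    _ = α * generatorConst α μ q * τ ^ (t + 1) := by ring

lemma norm_le_generatorConst_mul_pow [NormedAlgebra ℂ 𝔸] {M P : 𝔸} {p : ℕ}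
    (hα : 1 ≤ α) (hμ : 1 ≤ μ) (hτ : 0 < τ) (hM : ‖M‖ ≤ μ) (hP : ‖P‖ ≤ μ) (hG₀ : G 0 = M)
    (hΩ : ∀ t, ‖Ω (t + 1)‖ ≤ α * τ * ‖G t‖)
    (hG : ∀ q, q + 1 ≤ p → ‖G (q + 1)‖ ≤ ‖commutatorSeries Ω (Icc 1 (q + 1)) (q + 1) M‖ +
      τ⁻¹ * ‖commutatorSeries Ω (Icc 2 (q + 1)) (q + 1 + 1) P‖) :
    ∀ q ≤ p, ‖G q‖ ≤ generatorConst α μ q * τ ^ q := by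
  intro q
  induction q using Nat.strong_induction_on with
  | _ q ih =>
    intro hq
    cases q with
    | zero => simpa [hG₀, generatorConst] using hM
    | succ q =>
      have hΩq : ∀ s, 1 ≤ s → s ≤ q + 1 → ‖Ω s‖ ≤ α * generatorConst α μ q * τ ^ s :=
        fun s => norm_le_generatorConst_mul_pow_of_le hα hμ hτ.le hΩ
          fun t ht => ih t (by omega) (by omega)
      have ha : 1 ≤ 2 * (α * generatorConst α μ q) := by
        nlinarith [one_le_generatorConst hα hμ q]
      refine (hG q hq).trans ((norm_commutatorSeries_add_le q ha hτ hM hP hΩq).trans_eq ?_)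
      rw [generatorConst]

end GeneratorConst

lemma norm_sum_Icc_le_of_norm_le_mul_pow {E : Type*} [SeminormedAddCommGroup E] {f : ℕ → E}
    {W τ : ℝ} {p : ℕ} (hW : 0 ≤ W) (hτ₀ : 0 ≤ τ) (hτ₁ : τ ≤ 1)
    (h : ∀ q, 1 ≤ q → q ≤ p → ‖f q‖ ≤ W * τ ^ q) : ‖∑ q ∈ Icc 1 p, f q‖ ≤ p * W * τ := by
  refine (norm_sum_le _ _).trans ((sum_le_card_nsmul _ _ (W * τ) fun q hq => ?_).trans_eq ?_)
  · obtain ⟨hq₁, hq₂⟩ := mem_Icc.1 hq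
    exact (h q hq₁ hq₂).trans (by gcongr; exact pow_le_of_le_one hτ₀ hτ₁ (by omega))
  · simp [mul_assoc]

theorem schrieffer_wolff_generator_bounds_general
    (p : ℕ) (mNorm pNorm : ℝ) :
    ∃ W : ℝ, 0 < W ∧
      ∀ (n : ℕ) (P M : Matrix (Fin n) (Fin n) ℂ), P.IsHermitian →
        NormedSpace.exp ((((2 * Real.pi : ℝ) : ℂ) * Complex.I) • P) = 1 →
        ‖M‖ ≤ mNorm → ‖P‖ ≤ pNorm →
        ∀ τ : ℝ, τ ∈ Set.Ioo (0 : ℝ) 1 →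
        ∀ (E : Matrix (Fin n) (Fin n) ℂ → Matrix (Fin n) (Fin n) ℂ),
          (∀ A, E A = ∫ s in (0:ℝ)..1,
            NormedSpace.exp ((((2 * Real.pi * s : ℝ) : ℂ) * Complex.I) • P) * A *
              NormedSpace.exp ((-((2 * Real.pi * s : ℝ) : ℂ) * Complex.I) • P)) →
        ∀ (G Ω : ℕ → Matrix (Fin n) (Fin n) ℂ),
          G 0 = M →
          (∀ q, 1 ≤ q → Ω q = ((((2 * Real.pi : ℝ) : ℂ) * Complex.I) * (τ : ℂ)) •
            ∫ s₁ in (0:ℝ)..1, ∫ s₂ in (0:ℝ)..s₁,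
              NormedSpace.exp ((((2 * Real.pi * s₂ : ℝ) : ℂ) * Complex.I) • P) *
                (G (q - 1) - E (G (q - 1))) *
                NormedSpace.exp ((-((2 * Real.pi * s₂ : ℝ) : ℂ) * Complex.I) • P)) →
          (∀ q, 1 ≤ q → q ≤ p → G q =
            (∑ k ∈ Finset.Icc 1 q, ((-1 : ℂ) ^ k / (k.factorial : ℂ)) •
              ∑ i ∈ (Finset.Nat.antidiagonalTuple k q).filter (fun i => ∀ j, 1 ≤ i j),
                nestedAd (fun j => Ω (i j)) M) +
            τ⁻¹ • ∑ k ∈ Finset.Icc 2 q, ((-1 : ℂ) ^ k / (k.factorial : ℂ)) •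
              ∑ i ∈ (Finset.Nat.antidiagonalTuple k (q + 1)).filter (fun i => ∀ j, 1 ≤ i j),
                nestedAd (fun j => Ω (i j)) P) →
          (∀ q, 1 ≤ q → q ≤ p → ‖Ω q‖ ≤ W * τ ^ q) ∧
          ‖∑ q ∈ Finset.Icc 1 p, Ω q‖ ≤ p * W * τ := by
  set μ := max (max mNorm pNorm) 1
  set α := generatorGain μ
  have hμ : 1 ≤ μ := le_max_right _ _
  have hα : 1 ≤ α := one_le_generatorGain (by linarith)
  have hW : 0 < α * generatorConst α μ p :=
    mul_pos (by linarith) (by linarith [one_le_generatorConst hα hμ p])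
  refine ⟨_, hW, ?_⟩
  intro n P M _ _ hM hP τ ⟨hτ₀, hτ₁⟩ E hE G Ω hG₀ hΩ hG
  have hMμ : ‖M‖ ≤ μ := hM.trans ((le_max_left _ _).trans (le_max_left _ _))
  have hPμ : ‖P‖ ≤ μ := hP.trans ((le_max_right _ _).trans (le_max_left _ _))
  have hΩG : ∀ t, ‖Ω (t + 1)‖ ≤ α * τ * ‖G t‖ := fun t => by
    rw [hΩ (t + 1) t.succ_pos, Nat.add_sub_cancel]
    exact norm_generator_le P (G t) E hE hτ₀.le hPμ
  have hGC := norm_le_generatorConst_mul_pow hα hμ hτ₀ hMμ hPμ hG₀ hΩG fun q hq => by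
    rw [hG (q + 1) q.succ_pos hq]
    refine (norm_add_le _ _).trans_eq ?_
    rw [norm_smul, Real.norm_of_nonneg (inv_nonneg.2 hτ₀.le)]
    rfl
  have hΩC : ∀ q, 1 ≤ q → q ≤ p → ‖Ω q‖ ≤ α * generatorConst α μ p * τ ^ q := fun q hq₁ hq₂ =>
    norm_le_generatorConst_mul_pow_of_le hα hμ hτ₀.le hΩG hGC hq₁ (by omega)
  exact ⟨hΩC, norm_sum_Icc_le_of_norm_le_mul_pow hW.le hτ₀.le hτ₁.le hΩC⟩

/-- **Bounds on the Schrieffer-Wolff generators.**  For every `p ≥ 1` and bounds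
`mNorm, pNorm` there is a constant `W > 0`, depending only on `p`, `mNorm` and `pNorm`
(not on the matrix size `n` or on `τ`), such that for all Hermitian `P` with
`exp(2πiP) = I`, `‖P‖ ≤ pNorm`, all `M` with `‖M‖ ≤ mNorm` and all `τ ∈ (0,1)`, the
order-`q` generators `Ω⁽ᑫ⁾` of the Schrieffer-Wolff recursion satisfy `‖Ω⁽ᑫ⁾‖ ≤ W·τ^q`
for `1 ≤ q ≤ p`, and consequently `‖Ω⁽¹⁾ + ⋯ + Ω⁽ᵖ⁾‖ ≤ p·W·τ`. -/
theorem schrieffer_wolff_generator_bounds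
    (p : ℕ) (hp : 1 ≤ p) (mNorm pNorm : ℝ) :
    ∃ W : ℝ, 0 < W ∧
      ∀ (n : ℕ) (P M : Matrix (Fin n) (Fin n) ℂ), P.IsHermitian →
        NormedSpace.exp ((((2 * Real.pi : ℝ) : ℂ) * Complex.I) • P) = 1 →
        ‖M‖ ≤ mNorm → ‖P‖ ≤ pNorm →
        ∀ τ : ℝ, τ ∈ Set.Ioo (0 : ℝ) 1 →
        ∀ (E : Matrix (Fin n) (Fin n) ℂ → Matrix (Fin n) (Fin n) ℂ),
          (∀ A, E A = ∫ s in (0:ℝ)..1,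
            NormedSpace.exp ((((2 * Real.pi * s : ℝ) : ℂ) * Complex.I) • P) * A *
              NormedSpace.exp ((-((2 * Real.pi * s : ℝ) : ℂ) * Complex.I) • P)) →
        ∀ (G Ω : ℕ → Matrix (Fin n) (Fin n) ℂ),
          G 0 = M →
          (∀ q, 1 ≤ q → Ω q = ((((2 * Real.pi : ℝ) : ℂ) * Complex.I) * (τ : ℂ)) •
            ∫ s₁ in (0:ℝ)..1, ∫ s₂ in (0:ℝ)..s₁,
              NormedSpace.exp ((((2 * Real.pi * s₂ : ℝ) : ℂ) * Complex.I) • P) *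
                (G (q - 1) - E (G (q - 1))) *
                NormedSpace.exp ((-((2 * Real.pi * s₂ : ℝ) : ℂ) * Complex.I) • P)) →
          (∀ q, 1 ≤ q → q ≤ p → G q =
            (∑ k ∈ Finset.Icc 1 q, ((-1 : ℂ) ^ k / (k.factorial : ℂ)) •
              ∑ i ∈ (Finset.Nat.antidiagonalTuple k q).filter (fun i => ∀ j, 1 ≤ i j),
                nestedAd (fun j => Ω (i j)) M) +
            τ⁻¹ • ∑ k ∈ Finset.Icc 2 q, ((-1 : ℂ) ^ k / (k.factorial : ℂ)) •
              ∑ i ∈ (Finset.Nat.antidiagonalTuple k (q + 1)).filter (fun i => ∀ j, 1 ≤ i j),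
                nestedAd (fun j => Ω (i j)) P) →
          (∀ q, 1 ≤ q → q ≤ p → ‖Ω q‖ ≤ W * τ ^ q) ∧
          ‖∑ q ∈ Finset.Icc 1 p, Ω q‖ ≤ p * W * τ :=
  schrieffer_wolff_generator_bounds_general p mNorm pNorm
end
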